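/- arXiv:2012.10077 — 6 statements merged into one kernel-verified Lean document; each statement's English description precedes it below -/
import Mathlib

section
/- Consider 4 groups and 2 periods with outcomes Y_{g,t} ∈ ℝ. Define first treatments D^1: D^1_{g,1}=0 for all g, D^1_{2,2}=D^1_{4,2}=1, D^1_{1,2}=D^1_{3,2}=0; second treatments D^2: D^2_{g,1}=0 for all g, D^2_{3,2}=D^2_{4,2}=1, D^2_{1,2}=D^2_{2,2}=0. Then the coefficient β̂ on D^1 in the OLS regression of Y_{g,t} on group fixed effects, period fixed effects, D^1_{g,t} and D^2_{g,t} (with equal weights) satisfies β̂ = ½[(Y_{2,2}−Y_{2,1}) − (Y_{1,2}−Y_{1,1})] + ½[(Y_{4,2}−Y_{4,1}) − (Y_{3,2}−Y_{3,1})]. -/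
open Finset

/-!
The fitted parameters minimise the sum of squared residuals, so the residual is orthogonal to
every regressor: the four group dummies, the period-2 dummy, `D¹` and `D²`. For this design
these seven normal equations are linear in the cell residuals, and eliminating the fixed
effects from them leaves `β̂` equal to the average of the two difference-in-differences.
-/

theorem sum_mul_eq_zero_of_forall_sum_sq_le {ι : Type*} [Fintype ι] (e x : ι → ℝ)
    (h : ∀ c : ℝ, ∑ i, e i ^ 2 ≤ ∑ i, (e i - c * x i) ^ 2) :
    ∑ i, e i * x i = 0 := by
  have hderiv : HasDerivAt (fun c : ℝ => ∑ i, (e i - c * x i) ^ 2)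
      (∑ i, -2 * (e i * x i)) 0 := by
    refine HasDerivAt.fun_sum fun i _ => ?_
    refine ((hasDerivAt_id' (x := (0 : ℝ))).mul_const (x i)).const_sub (e i)
      |>.fun_pow 2 |>.congr_deriv ?_
    push_cast
    ring
  have hmin : IsLocalMin (fun c : ℝ => ∑ i, (e i - c * x i) ^ 2) 0 :=
    Filter.Eventually.of_forall fun c => by simpa using h c
  simpa [← mul_sum] using hmin.hasDerivAt_eq_zero hderiv

theorem sum_sum_mul_eq_zero_of_forall_sum_sum_sq_le {ι κ : Type*} [Fintype ι] [Fintype κ]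
    (e x : ι → κ → ℝ)
    (h : ∀ c : ℝ, ∑ i, ∑ j, e i j ^ 2 ≤ ∑ i, ∑ j, (e i j - c * x i j) ^ 2) :
    ∑ i, ∑ j, e i j * x i j = 0 := by
  simp only [← Fintype.sum_prod_type'] at h ⊢
  exact sum_mul_eq_zero_of_forall_sum_sq_le (fun p : ι × κ => e p.1 p.2) (fun p => x p.1 p.2) h

/-- Groups 1–4 and periods 1, 2 of the paper are indexed `0`–`3` and `0`, `1`. -/
theorem twfe_two_periods_four_groups_decomposition
    (Y D1 D2 : Fin 4 → Fin 2 → ℝ)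
    (hD1 : ∀ g t, D1 g t = if (g = 1 ∨ g = 3) ∧ t = 1 then 1 else 0)
    (hD2 : ∀ g t, D2 g t = if (g = 2 ∨ g = 3) ∧ t = 1 then 1 else 0)
    (α β δ : ℝ) (γ : Fin 4 → ℝ) (ν : Fin 2 → ℝ)
    (hmin : ∀ (α' β' δ' : ℝ) (γ' : Fin 4 → ℝ) (ν' : Fin 2 → ℝ),
      ∑ g, ∑ t, (Y g t - α - γ g - ν t - β * D1 g t - δ * D2 g t) ^ 2 ≤
      ∑ g, ∑ t, (Y g t - α' - γ' g - ν' t - β' * D1 g t - δ' * D2 g t) ^ 2) :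
    β = (1 / 2) * ((Y 1 1 - Y 1 0) - (Y 0 1 - Y 0 0))
      + (1 / 2) * ((Y 3 1 - Y 3 0) - (Y 2 1 - Y 2 0)) := by
  set e : Fin 4 → Fin 2 → ℝ := fun g t => Y g t - α - γ g - ν t - β * D1 g t - δ * D2 g t
  have normal (x : Fin 4 → Fin 2 → ℝ)
      (hx : ∀ c : ℝ, ∑ g, ∑ t, e g t ^ 2 ≤ ∑ g, ∑ t, (e g t - c * x g t) ^ 2) :
      ∑ g, ∑ t, e g t * x g t = 0 :=
    sum_sum_mul_eq_zero_of_forall_sum_sum_sq_le e x hx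
  have hγ (g₀ : Fin 4) : ∑ g, ∑ t, e g t * (if g = g₀ then 1 else 0) = 0 :=
    normal _ fun c => (hmin α β δ (fun g => γ g + c * if g = g₀ then 1 else 0) ν).trans_eq
      (by congr! 3; ring)
  have hν : ∑ g, ∑ t, e g t * (if t = 1 then 1 else 0) = 0 :=
    normal _ fun c => (hmin α β δ γ (fun t => ν t + c * if t = 1 then 1 else 0)).trans_eq
      (by congr! 3; ring)
  have hβ : ∑ g, ∑ t, e g t * D1 g t = 0 :=
    normal _ fun c => (hmin α (β + c) δ γ ν).trans_eq (by congr! 3; ring)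
  have hδ : ∑ g, ∑ t, e g t * D2 g t = 0 :=
    normal _ fun c => (hmin α β (δ + c) γ ν).trans_eq (by congr! 3; ring)
  have h0 := hγ 0
  have h1 := hγ 1
  have h2 := hγ 2
  have h3 := hγ 3
  simp only [e, hD1, hD2, Fin.sum_univ_four, Fin.sum_univ_two, Fin.reduceEq,
    true_or, or_true, or_self, and_true, and_false, ↓reduceIte] at h0 h1 h2 h3 hν hβ hδ
  linarith
end

section
/- Let G,T ≥ 2, with thresholds 1 < G^1 < G^2 ≤ G and 1 < T^1 < T^2 ≤ T, and define D^1_{g,t} = 1{g ≥ G^1}1{t ≥ T^1} and D^2_{g,t} = 1{g ≥ G^2}1{t ≥ T^2}. Suppose weights factor as N_{g,t} = A·a_g·b_t with a_g,b_t > 0, Σ_g a_g = Σ_t b_t = 1. Let p^k_G = Σ_g a_g 1{g ≥ G^k} and p^k_T = Σ_t b_t 1{t ≥ T^k}, k∈{1,2}. Then the residual of the weighted least squares regression of D^1_{g,t} on a constant, group dummies, time dummies, and D^2_{g,t} equals ε_{g,t} = (1{g≥G^1}−p^1_G)(1{t≥T^1}−p^1_T) − [(1−p^1_G)(1−p^1_T)/((1−p^2_G)(1−p^2_T))]·(1{g≥G^2}−p^2_G)(1{t≥T^2}−p^2_T).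 -/
/-!
Let `e` be the claimed residual. Expanding the products shows that `D¹ - e` is itself a fit:
a constant plus group and time effects plus `ζ D²`. And `e` is orthogonal to every regressor in
the `N`-weighted inner product: since the weights are separable, the product of a centred group
indicator and a centred time indicator is orthogonal to every `α + γ_g + ν_t`, while on the
support of `D²`, where `D¹ = 1` by nesting, `e` vanishes precisely for the stated `ζ`.
So the residual of any minimiser is `e + H` with `H` a fit, Pythagoras turns minimality into
`∑ N H² ≤ 0`, and positivity of the weights forces `H = 0`.
-/

open Finset

section WeightedSums

variable {ι κ : Type*}

theorem eq_zero_of_sum_mul_sq_add_le {s : Finset ι} {w e h : ι → ℝ} (hw : ∀ i ∈ s, 0 < w i)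
    (horth : ∑ i ∈ s, w i * (e i * h i) = 0)
    (hle : ∑ i ∈ s, w i * (e i + h i) ^ 2 ≤ ∑ i ∈ s, w i * e i ^ 2) :
    ∀ i ∈ s, h i = 0 := by
  have hexpand : ∑ i ∈ s, w i * (e i + h i) ^ 2 =
      ∑ i ∈ s, w i * e i ^ 2 + 2 * ∑ i ∈ s, w i * (e i * h i) + ∑ i ∈ s, w i * h i ^ 2 := by
    rw [mul_sum, ← sum_add_distrib, ← sum_add_distrib]
    exact sum_congr rfl fun i _ => by ring
  have hnonneg : ∀ i ∈ s, 0 ≤ w i * h i ^ 2 := fun i hi => mul_nonneg (hw i hi).le (sq_nonneg _)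
  have hzero : ∑ i ∈ s, w i * h i ^ 2 = 0 :=
    le_antisymm (by linarith) (sum_nonneg hnonneg)
  intro i hi
  simpa [(hw i hi).ne'] using (sum_eq_zero_iff_of_nonneg hnonneg).1 hzero i hi

theorem eq_zero_of_sum_sum_mul_sq_add_le {s : Finset ι} {t : Finset κ} {w e h : ι → κ → ℝ}
    (hw : ∀ i ∈ s, ∀ j ∈ t, 0 < w i j)
    (horth : ∑ i ∈ s, ∑ j ∈ t, w i j * (e i j * h i j) = 0)
    (hle : ∑ i ∈ s, ∑ j ∈ t, w i j * (e i j + h i j) ^ 2 ≤ ∑ i ∈ s, ∑ j ∈ t, w i j * e i j ^ 2) :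
    ∀ i ∈ s, ∀ j ∈ t, h i j = 0 := by
  simp only [← sum_product' s t] at horth hle
  exact fun i hi j hj => eq_zero_of_sum_mul_sq_add_le (s := s ×ˢ t) (h := fun p => h p.1 p.2)
    (fun p hp => hw _ (mem_product.1 hp).1 _ (mem_product.1 hp).2) horth hle (i, j)
    (mem_product.2 ⟨hi, hj⟩)

theorem sum_mul_sub_eq_zero {s : Finset ι} {a f : ι → ℝ} {p : ℝ} (ha : ∑ i ∈ s, a i = 1)
    (hp : p = ∑ i ∈ s, a i * f i) : ∑ i ∈ s, a i * (f i - p) = 0 := by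
  simp only [mul_sub, sum_sub_distrib, ← sum_mul, ha, one_mul, hp, sub_self]

theorem sum_mul_indicator_lt_one [LinearOrder ι] {s : Finset ι} {a : ι → ℝ}
    (ha : ∑ i ∈ s, a i = 1) (hpos : ∀ i ∈ s, 0 < a i) {c i₀ : ι} (hi₀ : i₀ ∈ s) (hlt : i₀ < c) :
    ∑ i ∈ s, a i * (if c ≤ i then 1 else 0) < 1 := by
  refine (sum_lt_sum (fun i hi => ?_) ⟨i₀, hi₀, by simp [not_le.2 hlt, hpos i₀ hi₀]⟩).trans_eq ha
  split_ifs
  · rw [mul_one]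
  · rw [mul_zero]; exact (hpos i hi).le

theorem sum_sum_mul_mul_add_eq_zero {s : Finset ι} {t : Finset κ} {a u γ : ι → ℝ}
    {b v ν : κ → ℝ} (hu : ∑ i ∈ s, a i * u i = 0) (hv : ∑ j ∈ t, b j * v j = 0) :
    ∑ i ∈ s, ∑ j ∈ t, a i * b j * (u i * v j) * (γ i + ν j) = 0 := by
  have hsplit : ∀ i j, a i * b j * (u i * v j) * (γ i + ν j) =
      a i * u i * γ i * (b j * v j) + a i * u i * (b j * v j * ν j) := fun i j => by ring
  simp only [hsplit, sum_add_distrib, ← mul_sum, ← sum_mul, hv, hu, mul_zero, zero_mul, add_zero,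
    sum_const_zero]

theorem sum_sum_mul_sub_mul_fit_eq_zero {s : Finset ι} {t : Finset κ} {A : ℝ}
    {a u₁ u₂ : ι → ℝ} {b v₁ v₂ : κ → ℝ} {N D : ι → κ → ℝ} (hN : ∀ i j, N i j = A * a i * b j)
    (hu₁ : ∑ i ∈ s, a i * u₁ i = 0) (hu₂ : ∑ i ∈ s, a i * u₂ i = 0)
    (hv₁ : ∑ j ∈ t, b j * v₁ j = 0) (hv₂ : ∑ j ∈ t, b j * v₂ j = 0) {Z : ℝ}
    (hD : ∀ i j, (u₁ i * v₁ j - Z * (u₂ i * v₂ j)) * D i j = 0)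
    (c ζ : ℝ) (γ : ι → ℝ) (ν : κ → ℝ) :
    ∑ i ∈ s, ∑ j ∈ t,
      N i j * ((u₁ i * v₁ j - Z * (u₂ i * v₂ j)) * (c + γ i + ν j + ζ * D i j)) = 0 := by
  have hsplit : ∀ i j, N i j * ((u₁ i * v₁ j - Z * (u₂ i * v₂ j)) * (c + γ i + ν j + ζ * D i j))
      = A * (a i * b j * (u₁ i * v₁ j) * ((c + γ i) + ν j))
        - A * Z * (a i * b j * (u₂ i * v₂ j) * ((c + γ i) + ν j)) := fun i j => by
    rw [hN]
    linear_combination A * a i * b j * ζ * hD i j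
  simp only [hsplit, sum_sub_distrib, ← mul_sum, sum_sum_mul_mul_add_eq_zero hu₁ hv₁,
    sum_sum_mul_mul_add_eq_zero hu₂ hv₂, mul_zero, sub_zero]

theorem sub_mul_nested_indicator_eq_zero [LinearOrder ι] [LinearOrder κ]
    {G₁ G₂ g : ι} {T₁ T₂ t : κ} (hG : G₁ ≤ G₂) (hT : T₁ ≤ T₂) {p₁ p₂ q₁ q₂ Z : ℝ}
    (hZ : Z * ((1 - p₂) * (1 - q₂)) = (1 - p₁) * (1 - q₁)) :
    (((if G₁ ≤ g then 1 else 0) - p₁) * ((if T₁ ≤ t then 1 else 0) - q₁)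
      - Z * (((if G₂ ≤ g then 1 else 0) - p₂) * ((if T₂ ≤ t then 1 else 0) - q₂)))
      * ((if G₂ ≤ g then 1 else 0) * (if T₂ ≤ t then 1 else 0)) = 0 := by
  by_cases hg : G₂ ≤ g
  · by_cases ht : T₂ ≤ t
    · simp only [if_pos hg, if_pos ht, if_pos (hG.trans hg), if_pos (hT.trans ht)]
      linear_combination -hZ
    · simp [ht]
  · simp [hg]

end WeightedSums

/-- In the standard DID design with two nested staggered treatments
`D¹_{g,t}=1{g≥G¹}1{t≥T¹}`, `D²_{g,t}=1{g≥G²}1{t≥T²}` and multiplicatively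
separable weights `N_{g,t}=A·a_g·b_t`, the residual of the weighted least
squares regression of `D¹` on a constant, group dummies, time dummies and `D²`
has the stated closed form. -/
theorem residual_closed_form_nested_DID
    (G T G1 G2 T1 T2 : ℕ)
    (hG1 : 1 < G1) (hG12 : G1 < G2) (hG2 : G2 ≤ G)
    (hT1 : 1 < T1) (hT12 : T1 < T2) (hT2 : T2 ≤ T)
    (A : ℝ) (hA : 0 < A)
    (a b : ℕ → ℝ)
    (ha : ∀ g ∈ Finset.Icc 1 G, 0 < a g) (hb : ∀ t ∈ Finset.Icc 1 T, 0 < b t)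
    (hsa : ∑ g ∈ Finset.Icc 1 G, a g = 1) (hsb : ∑ t ∈ Finset.Icc 1 T, b t = 1)
    (N D1 D2 : ℕ → ℕ → ℝ)
    (hN : ∀ g t, N g t = A * a g * b t)
    (hD1 : ∀ g t, D1 g t =
      (if G1 ≤ g then (1 : ℝ) else 0) * (if T1 ≤ t then (1 : ℝ) else 0))
    (hD2 : ∀ g t, D2 g t =
      (if G2 ≤ g then (1 : ℝ) else 0) * (if T2 ≤ t then (1 : ℝ) else 0))
    (p1G p2G p1T p2T : ℝ)
    (hp1G : p1G = ∑ g ∈ Finset.Icc 1 G, a g * (if G1 ≤ g then (1 : ℝ) else 0))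
    (hp2G : p2G = ∑ g ∈ Finset.Icc 1 G, a g * (if G2 ≤ g then (1 : ℝ) else 0))
    (hp1T : p1T = ∑ t ∈ Finset.Icc 1 T, b t * (if T1 ≤ t then (1 : ℝ) else 0))
    (hp2T : p2T = ∑ t ∈ Finset.Icc 1 T, b t * (if T2 ≤ t then (1 : ℝ) else 0))
    (α ζ : ℝ) (γ ν : ℕ → ℝ)
    (hmin : ∀ (α' ζ' : ℝ) (γ' ν' : ℕ → ℝ),
      ∑ g ∈ Finset.Icc 1 G, ∑ t ∈ Finset.Icc 1 T,
        N g t * (D1 g t - α - γ g - ν t - ζ * D2 g t) ^ 2 ≤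
      ∑ g ∈ Finset.Icc 1 G, ∑ t ∈ Finset.Icc 1 T,
        N g t * (D1 g t - α' - γ' g - ν' t - ζ' * D2 g t) ^ 2) :
    ∀ g ∈ Finset.Icc 1 G, ∀ t ∈ Finset.Icc 1 T,
      D1 g t - α - γ g - ν t - ζ * D2 g t =
        ((if G1 ≤ g then (1 : ℝ) else 0) - p1G)
          * ((if T1 ≤ t then (1 : ℝ) else 0) - p1T)
        - (1 - p1G) * (1 - p1T) / ((1 - p2G) * (1 - p2T))
          * (((if G2 ≤ g then (1 : ℝ) else 0) - p2G)
            * ((if T2 ≤ t then (1 : ℝ) else 0) - p2T)) := by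
  have hp2G1 : p2G < 1 := hp2G ▸ sum_mul_indicator_lt_one hsa ha (left_mem_Icc.2 (by omega))
    (by omega : 1 < G2)
  have hp2T1 : p2T < 1 := hp2T ▸ sum_mul_indicator_lt_one hsb hb (left_mem_Icc.2 (by omega))
    (by omega : 1 < T2)
  set Z := (1 - p1G) * (1 - p1T) / ((1 - p2G) * (1 - p2T))
  have hZ : Z * ((1 - p2G) * (1 - p2T)) = (1 - p1G) * (1 - p1T) :=
    div_mul_cancel₀ _ (mul_ne_zero (sub_ne_zero.2 hp2G1.ne') (sub_ne_zero.2 hp2T1.ne'))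
  set e : ℕ → ℕ → ℝ := fun g t =>
    ((if G1 ≤ g then (1 : ℝ) else 0) - p1G) * ((if T1 ≤ t then (1 : ℝ) else 0) - p1T)
      - Z * (((if G2 ≤ g then (1 : ℝ) else 0) - p2G) * ((if T2 ≤ t then (1 : ℝ) else 0) - p2T))
  set α₀ := -p1G * p1T + Z * p2G * p2T
  set γ₀ : ℕ → ℝ := fun g =>
    p1T * (if G1 ≤ g then (1 : ℝ) else 0) - Z * p2T * (if G2 ≤ g then (1 : ℝ) else 0)
  set ν₀ : ℕ → ℝ := fun t =>
    p1G * (if T1 ≤ t then (1 : ℝ) else 0) - Z * p2G * (if T2 ≤ t then (1 : ℝ) else 0)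
  set H : ℕ → ℕ → ℝ := fun g t => α₀ - α + (γ₀ g - γ g) + (ν₀ t - ν t) + (Z - ζ) * D2 g t
  have hres : ∀ g t, D1 g t - α - γ g - ν t - ζ * D2 g t = e g t + H g t := fun g t => by
    simp only [e, H, α₀, γ₀, ν₀, hD1, hD2]; ring
  have hres₀ : ∀ g t, D1 g t - α₀ - γ₀ g - ν₀ t - Z * D2 g t = e g t := fun g t => by
    simp only [e, α₀, γ₀, ν₀, hD1, hD2]; ring
  have hH := eq_zero_of_sum_sum_mul_sq_add_le (h := H)
    (fun g hg t ht => hN g t ▸ mul_pos (mul_pos hA (ha g hg)) (hb t ht))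
    (sum_sum_mul_sub_mul_fit_eq_zero hN (sum_mul_sub_eq_zero hsa hp1G)
      (sum_mul_sub_eq_zero hsa hp2G) (sum_mul_sub_eq_zero hsb hp1T) (sum_mul_sub_eq_zero hsb hp2T)
      (fun g t => hD2 g t ▸ sub_mul_nested_indicator_eq_zero hG12.le hT12.le hZ)
      (α₀ - α) (Z - ζ) (fun g => γ₀ g - γ g) (fun t => ν₀ t - ν t))
    (by simpa only [hres, hres₀] using hmin α₀ Z γ₀ ν₀)
  intro g hg t ht
  rw [hres, hH g hg t ht, add_zero]
end

section
/- In the standard DID design with two nested treatments and separable weights, the coefficient ζ on D^2 in the weighted least squares regression of D^1 on a constant, group dummies, time dummies, and D^2 equals ζ = (1−p^1_G)(1−p^1_T)/((1−p^2_G)(1−p^2_T)). -/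
/-!
Shifting `ζ` by `s` while compensating in `α`, `γ` and `ν` moves the fitted values by `s · e`, where
`e = (1{g ≥ G²} − p²_G)(1{t ≥ T²} − p²_T)` is what remains of `D²` after removing two-way fixed
effects; minimality then forces the residual to be `N`-orthogonal to `e`. With product weights `e`
is orthogonal to every function of `g` alone or `t` alone, and the remaining moments factor into
one-dimensional ones which, by nestedness, equal `p²(1 − p¹)` and `p²(1 − p²)`. The normal equation
becomes `p²_G (1 − p¹_G) p²_T (1 − p¹_T) = ζ p²_G (1 − p²_G) p²_T (1 − p²_T)`.
-/

open Finset

section LeastSquares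

variable {ι κ : Type*}

theorem sum_mul_mul_eq_zero_of_forall_le (s : Finset ι) (w r e : ι → ℝ)
    (h : ∀ c : ℝ, ∑ i ∈ s, w i * r i ^ 2 ≤ ∑ i ∈ s, w i * (r i - c * e i) ^ 2) :
    ∑ i ∈ s, w i * r i * e i = 0 := by
  set B := ∑ i ∈ s, w i * e i ^ 2
  set C := ∑ i ∈ s, w i * r i * e i
  have hquad : ∀ c : ℝ, 0 ≤ B * (c * c) + (-2 * C) * c + 0 := by
    intro c
    have hexp : ∑ i ∈ s, w i * (r i - c * e i) ^ 2
        = ∑ i ∈ s, w i * r i ^ 2 + (B * (c * c) + (-2 * C) * c) := by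
      simp only [B, C, sum_mul, mul_sum, ← sum_add_distrib]
      exact sum_congr rfl fun i _ => by ring
    linarith [h c]
  have hdisc := discrim_le_zero hquad
  rw [discrim] at hdisc
  nlinarith [sq_nonneg C]

theorem sum_sum_residual_mul_eq_zero_of_isMin (s : Finset ι) (u : Finset κ)
    (N y x e : ι → κ → ℝ) (c : ℝ) (φ : ι → ℝ) (ψ : κ → ℝ)
    (hx : ∀ g t, x g t = e g t + c + φ g + ψ t)
    (α ζ : ℝ) (γ : ι → ℝ) (ν : κ → ℝ)
    (hmin : ∀ (α' ζ' : ℝ) (γ' : ι → ℝ) (ν' : κ → ℝ),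
      ∑ g ∈ s, ∑ t ∈ u, N g t * (y g t - α - γ g - ν t - ζ * x g t) ^ 2 ≤
      ∑ g ∈ s, ∑ t ∈ u, N g t * (y g t - α' - γ' g - ν' t - ζ' * x g t) ^ 2) :
    ∑ g ∈ s, ∑ t ∈ u, N g t * (y g t - α - γ g - ν t - ζ * x g t) * e g t = 0 := by
  rw [← sum_product']
  refine sum_mul_mul_eq_zero_of_forall_le (s ×ˢ u) (fun p => N p.1 p.2)
    (fun p => y p.1 p.2 - α - γ p.1 - ν p.2 - ζ * x p.1 p.2) (fun p => e p.1 p.2) fun k => ?_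
  have h := hmin (α - k * c) (ζ + k) (fun g => γ g - k * φ g) (fun t => ν t - k * ψ t)
  simp only [sum_product]
  convert h using 4 with g _ t _
  rw [hx]
  ring

end LeastSquares

section SeparableWeights

variable {ι κ : Type*} (s : Finset ι) (u : Finset κ) (A : ℝ) (a : ι → ℝ) (b : κ → ℝ)

theorem sum_sum_separable (F : ι → ℝ) (H : κ → ℝ) :
    ∑ g ∈ s, ∑ t ∈ u, A * a g * b t * (F g * H t)
      = A * ((∑ g ∈ s, a g * F g) * ∑ t ∈ u, b t * H t) := by
  rw [sum_mul_sum, mul_sum]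
  refine sum_congr rfl fun g _ => ?_
  rw [mul_sum]
  exact sum_congr rfl fun t _ => by ring

theorem sum_sum_twoWay_residual_mul_centered {F₁ F₂ : ι → ℝ} {H₁ H₂ : κ → ℝ} {p q α ζ : ℝ}
    {γ : ι → ℝ} {ν : κ → ℝ}
    (hp : ∑ g ∈ s, a g * (F₂ g - p) = 0) (hq : ∑ t ∈ u, b t * (H₂ t - q) = 0) :
    ∑ g ∈ s, ∑ t ∈ u, A * a g * b t * (F₁ g * H₁ t - α - γ g - ν t - ζ * (F₂ g * H₂ t)) *
        ((F₂ g - p) * (H₂ t - q))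
      = A * ((∑ g ∈ s, a g * (F₁ g * (F₂ g - p))) * (∑ t ∈ u, b t * (H₁ t * (H₂ t - q)))
          - ζ * (∑ g ∈ s, a g * (F₂ g * (F₂ g - p))) *
            (∑ t ∈ u, b t * (H₂ t * (H₂ t - q)))) := by
  have hsplit : ∀ g t,
      A * a g * b t * (F₁ g * H₁ t - α - γ g - ν t - ζ * (F₂ g * H₂ t)) *
          ((F₂ g - p) * (H₂ t - q))
        = A * a g * b t * ((F₁ g * (F₂ g - p)) * (H₁ t * (H₂ t - q)))
          + A * a g * b t * ((-(α + γ g) * (F₂ g - p)) * (H₂ t - q))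
          + A * a g * b t * ((F₂ g - p) * (-ν t * (H₂ t - q)))
          + -ζ * A * a g * b t * ((F₂ g * (F₂ g - p)) * (H₂ t * (H₂ t - q))) :=
    fun g t => by ring
  simp only [hsplit, sum_add_distrib, sum_sum_separable, hp, hq]
  ring

end SeparableWeights

section WeightedMeans

variable {ι : Type*} (s : Finset ι) (a : ι → ℝ)

theorem sum_mul_sub_eq_zero_of_sum_eq_one {f : ι → ℝ} {p : ℝ} (ha : ∑ i ∈ s, a i = 1)
    (hp : p = ∑ i ∈ s, a i * f i) : ∑ i ∈ s, a i * (f i - p) = 0 := by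
  simp only [mul_sub, sum_sub_distrib, ← sum_mul, ha, hp, one_mul, sub_self]

theorem sum_mul_mul_sub_of_mul_eq {f₁ f₂ : ι → ℝ} {p₁ p₂ : ℝ} (hf : ∀ i, f₁ i * f₂ i = f₂ i)
    (hp₁ : p₁ = ∑ i ∈ s, a i * f₁ i) (hp₂ : p₂ = ∑ i ∈ s, a i * f₂ i) :
    ∑ i ∈ s, a i * (f₁ i * (f₂ i - p₂)) = p₂ * (1 - p₁) := by
  calc ∑ i ∈ s, a i * (f₁ i * (f₂ i - p₂))
      = ∑ i ∈ s, (a i * f₂ i - a i * f₁ i * p₂) :=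
        sum_congr rfl fun i _ => by linear_combination a i * hf i
    _ = p₂ * (1 - p₁) := by rw [sum_sub_distrib, ← sum_mul, ← hp₁, ← hp₂]; ring

theorem sum_mul_ite_pos {P : ι → Prop} [DecidablePred P] (ha : ∀ i ∈ s, 0 < a i) {i : ι}
    (hi : i ∈ s) (hPi : P i) : 0 < ∑ j ∈ s, a j * (if P j then 1 else 0) :=
  sum_pos' (fun j hj => by split_ifs <;> simp [(ha j hj).le]) ⟨i, hi, by simpa [hPi] using ha i hi⟩

theorem sum_mul_ite_lt_one {P : ι → Prop} [DecidablePred P] (hsum : ∑ i ∈ s, a i = 1)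
    (ha : ∀ i ∈ s, 0 < a i) {i : ι} (hi : i ∈ s) (hPi : ¬P i) :
    ∑ j ∈ s, a j * (if P j then 1 else 0) < 1 := by
  have hcompl := sum_mul_ite_pos s a (P := fun j => ¬P j) ha hi hPi
  have hsplit : ∑ j ∈ s, a j * (if P j then 1 else 0) + ∑ j ∈ s, a j * (if ¬P j then 1 else 0)
      = ∑ j ∈ s, a j := by
    rw [← sum_add_distrib]
    exact sum_congr rfl fun j _ => by split_ifs <;> simp_all
  linarith

end WeightedMeans

theorem ite_one_mul_ite_one_of_imp {P Q : Prop} [Decidable P] [Decidable Q] (h : Q → P) :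
    (if P then (1 : ℝ) else 0) * (if Q then 1 else 0) = if Q then 1 else 0 := by
  by_cases hQ : Q <;> simp [hQ, h]

/-- In the standard DID design with two nested treatments and
separable weights, the coefficient `ζ` on `D²` in the weighted least squares
regression of `D¹` on a constant, group dummies, time dummies and `D²` equals
`(1−p¹_G)(1−p¹_T)/((1−p²_G)(1−p²_T))`. -/
theorem coefficient_on_second_treatment_nested_DID

    (G T G1 G2 T1 T2 : ℕ)
    (hG1 : 1 < G1) (hG12 : G1 < G2) (hG2 : G2 ≤ G)
    (hT1 : 1 < T1) (hT12 : T1 < T2) (hT2 : T2 ≤ T)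
    (A : ℝ) (hA : 0 < A)
    (a b : ℕ → ℝ)
    (ha : ∀ g ∈ Finset.Icc 1 G, 0 < a g) (hb : ∀ t ∈ Finset.Icc 1 T, 0 < b t)
    (hsa : ∑ g ∈ Finset.Icc 1 G, a g = 1) (hsb : ∑ t ∈ Finset.Icc 1 T, b t = 1)
    (N D1 D2 : ℕ → ℕ → ℝ)
    (hN : ∀ g t, N g t = A * a g * b t)
    (hD1 : ∀ g t, D1 g t =
      (if G1 ≤ g then (1 : ℝ) else 0) * (if T1 ≤ t then (1 : ℝ) else 0))
    (hD2 : ∀ g t, D2 g t =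
      (if G2 ≤ g then (1 : ℝ) else 0) * (if T2 ≤ t then (1 : ℝ) else 0))
    (p1G p2G p1T p2T : ℝ)
    (hp1G : p1G = ∑ g ∈ Finset.Icc 1 G, a g * (if G1 ≤ g then (1 : ℝ) else 0))
    (hp2G : p2G = ∑ g ∈ Finset.Icc 1 G, a g * (if G2 ≤ g then (1 : ℝ) else 0))
    (hp1T : p1T = ∑ t ∈ Finset.Icc 1 T, b t * (if T1 ≤ t then (1 : ℝ) else 0))
    (hp2T : p2T = ∑ t ∈ Finset.Icc 1 T, b t * (if T2 ≤ t then (1 : ℝ) else 0))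
    (α ζ : ℝ) (γ ν : ℕ → ℝ)
    (hmin : ∀ (α' ζ' : ℝ) (γ' ν' : ℕ → ℝ),
      ∑ g ∈ Finset.Icc 1 G, ∑ t ∈ Finset.Icc 1 T,
        N g t * (D1 g t - α - γ g - ν t - ζ * D2 g t) ^ 2 ≤
      ∑ g ∈ Finset.Icc 1 G, ∑ t ∈ Finset.Icc 1 T,
        N g t * (D1 g t - α' - γ' g - ν' t - ζ' * D2 g t) ^ 2) :
    ζ = (1 - p1G) * (1 - p1T) / ((1 - p2G) * (1 - p2T)) := by
  set f₂ : ℕ → ℝ := fun g => if G2 ≤ g then 1 else 0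
  set h₂ : ℕ → ℝ := fun t => if T2 ≤ t then 1 else 0
  have hnormal := sum_sum_residual_mul_eq_zero_of_isMin _ _ N D1 D2
    (fun g t => (f₂ g - p2G) * (h₂ t - p2T)) (-(p2G * p2T)) (fun g => p2T * f₂ g)
    (fun t => p2G * h₂ t) (fun g t => by rw [hD2]; ring) α ζ γ ν hmin
  simp only [hN, hD1, hD2] at hnormal
  rw [sum_sum_twoWay_residual_mul_centered _ _ _ _ _
      (sum_mul_sub_eq_zero_of_sum_eq_one _ _ hsa hp2G)
      (sum_mul_sub_eq_zero_of_sum_eq_one _ _ hsb hp2T),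
    sum_mul_mul_sub_of_mul_eq _ _ (fun g => ite_one_mul_ite_one_of_imp hG12.le.trans) hp1G hp2G,
    sum_mul_mul_sub_of_mul_eq _ _ (fun t => ite_one_mul_ite_one_of_imp hT12.le.trans) hp1T hp2T,
    sum_mul_mul_sub_of_mul_eq _ _ (fun g => ite_one_mul_ite_one_of_imp id) hp2G hp2G,
    sum_mul_mul_sub_of_mul_eq _ _ (fun t => ite_one_mul_ite_one_of_imp id) hp2T hp2T] at hnormal
  have hp2G_pos : 0 < p2G :=
    hp2G ▸ sum_mul_ite_pos _ _ ha (i := G2) (mem_Icc.2 ⟨by omega, hG2⟩) le_rfl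
  have hp2T_pos : 0 < p2T :=
    hp2T ▸ sum_mul_ite_pos _ _ hb (i := T2) (mem_Icc.2 ⟨by omega, hT2⟩) le_rfl
  have hp2G_lt : p2G < 1 :=
    hp2G ▸ sum_mul_ite_lt_one _ _ hsa ha (i := 1) (mem_Icc.2 ⟨le_rfl, by omega⟩) (by omega)
  have hp2T_lt : p2T < 1 :=
    hp2T ▸ sum_mul_ite_lt_one _ _ hsb hb (i := 1) (mem_Icc.2 ⟨le_rfl, by omega⟩) (by omega)
  rw [eq_div_iff (mul_pos (sub_pos.2 hp2G_lt) (sub_pos.2 hp2T_lt)).ne']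
  refine mul_left_cancel₀ (by positivity : A * p2G * p2T ≠ 0) ?_
  linear_combination -hnormal
end

section
/- Let Y_{g,t}, D^1_{g,t}, D^{-1}_{g,t} be random variables on a probability space, g∈{1,...,G}, t∈{1,...,T}, with potential outcomes Y_{g,t}(d¹,d⁻¹) satisfying Y_{g,t} = Y_{g,t}(D^1_{g,t}, D^{-1}_{g,t}). Define Δ^1_{g,t} = Y_{g,t}(1,D^{-1}_{g,t}) − Y_{g,t}(0,D^{-1}_{g,t}) and Δ^{-1}_{g,t} = Y_{g,t}(0,D^{-1}_{g,t}) − Y_{g,t}(0,0). Suppose: (i) the per-group vectors of potential outcomes and treatments are mutually independent across g; (ii) for all g, t≥2, E[Y_{g,t}(0,0) − Y_{g,t−1}(0,0) | D_{g,1},...,D_{g,T}] = E[Y_{g,t}(0,0) − Y_{g,t−1}(0,0)]; (iii) E[Y_{g,t}(0,0) − Y_{g,t−1}(0,0)] does not vary across g. Then for all (g,g',t,t'), E[Y_{g,t}|𝐃] − E[Y_{g,t'}|𝐃] − (E[Y_{g',t}|𝐃] − E[Y_{g',t'}|𝐃]) = Σ over the four cells (with signs +,−,−,+) of D^1_{·,·}E[Δ^1_{·,·}|𝐃]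 + E[Δ^{-1}_{·,·}|𝐃], where 𝐃 denotes the full collection of treatments. -/
/-!
The observed outcome splits as `Y = D¹ Δ¹ + Δ⁻¹ + Y(0,0)` and `D¹` is `𝐃`-measurable, so the
double difference of `E[Y | 𝐃]` reduces to that of `E[Y(0,0) | 𝐃]`. Group `g`'s potential outcomes
are independent of the other groups' treatments, so conditioning an increment of `Y_g(0,0)` on
all of `𝐃` is the same as conditioning on group `g`'s own treatments; by strong exogeneity each
increment of `E[Y_g(0,0) | 𝐃]` is then its mean, which by common trends does not depend on `g`.
Telescoping over periods, the baseline terms cancel in the double difference.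
-/

open MeasureTheory ProbabilityTheory

theorem Nat.eq_of_forall_succ_eq_of_le {α : Type*} {u : ℕ → α} {a b : ℕ}
    (h : ∀ n, a ≤ n → n < b → u (n + 1) = u n) {m : ℕ} (ham : a ≤ m) (hmb : m ≤ b) :
    u m = u a := by
  induction m, ham using Nat.le_induction with
  | base => rfl
  | succ n han ih => exact (h n han hmb).trans (ih (by omega))

section

variable {Ω : Type*} {m₀ : MeasurableSpace Ω} {μ : Measure Ω}

theorem integrable_of_finite_index {ι E : Type*} [Fintype ι] [MeasurableSpace ι]
    [MeasurableSingletonClass ι] [NormedAddCommGroup E] {F : ι → Ω → E}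
    (hF : ∀ i, Integrable (F i) μ) {X : Ω → ι} (hX : Measurable X) :
    Integrable (fun ω => F (X ω) ω) μ := by
  classical
  have hsum : (fun ω => F (X ω) ω) = fun ω => ∑ i, (X ⁻¹' {i}).indicator (F i) ω := by
    ext ω
    simp [Set.indicator_apply, eq_comm]
  rw [hsum]
  exact integrable_finsetSum _ fun i _ => (hF i).indicator (hX (measurableSet_singleton i))

theorem setIntegral_eq_measureReal_mul_integral_of_indep [IsFiniteMeasure μ]
    {m₁ m₂ : MeasurableSpace Ω} (hm₁ : m₁ ≤ m₀) (hm₂ : m₂ ≤ m₀) (hind : Indep m₁ m₂ μ)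
    {f : Ω → ℝ} (hf : StronglyMeasurable[m₁] f) {s : Set Ω} (hs : MeasurableSet[m₂] s)
    (hfi : Integrable f μ) :
    ∫ ω in s, f ω ∂μ = μ.real s * ∫ ω, f ω ∂μ := by
  rw [← setIntegral_condExp hm₂ hfi hs,
    setIntegral_congr_ae (hm₂ _ hs) ((condExp_indep_eq hm₁ hm₂ hf hind).mono fun _ h _ => h),
    setIntegral_const, smul_eq_mul]

theorem setIntegral_eq_of_forall_setIntegral_inter_eq {E : Type*} [NormedAddCommGroup E]
    [NormedSpace ℝ E] {m₁ m₂ : MeasurableSpace Ω} (hm₁ : m₁ ≤ m₀)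
    (hm₂ : m₂ ≤ m₀) {f g : Ω → E} (hf : Integrable f μ) (hg : Integrable g μ)
    (h : ∀ s₁ s₂, MeasurableSet[m₁] s₁ → MeasurableSet[m₂] s₂ →
      ∫ ω in s₁ ∩ s₂, f ω ∂μ = ∫ ω in s₁ ∩ s₂, g ω ∂μ)
    {s : Set Ω} (hs : MeasurableSet[m₁ ⊔ m₂] s) :
    ∫ ω in s, f ω ∂μ = ∫ ω in s, g ω ∂μ := by
  have hle : m₁ ⊔ m₂ ≤ m₀ := sup_le hm₁ hm₂
  have hgen : m₁ ⊔ m₂ = MeasurableSpace.generateFrom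
      (Set.image2 (· ∩ ·) {s | MeasurableSet[m₁] s} {s | MeasurableSet[m₂] s}) := by
    refine le_antisymm (sup_le (fun s hs => ?_) (fun s hs => ?_))
      (MeasurableSpace.generateFrom_le ?_)
    · exact MeasurableSpace.measurableSet_generateFrom
        ⟨s, hs, Set.univ, MeasurableSet.univ, Set.inter_univ s⟩
    · exact MeasurableSpace.measurableSet_generateFrom
        ⟨Set.univ, MeasurableSet.univ, s, hs, Set.univ_inter s⟩
    · rintro _ ⟨s₁, hs₁, s₂, hs₂, rfl⟩
      exact (le_sup_left (a := m₁) _ hs₁).inter (le_sup_right (a := m₁) _ hs₂)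
  have hpi : IsPiSystem (Set.image2 (· ∩ ·) {s | MeasurableSet[m₁] s}
      {s | MeasurableSet[m₂] s}) := by
    rintro _ ⟨s₁, hs₁, s₂, hs₂, rfl⟩ _ ⟨t₁, ht₁, t₂, ht₂, rfl⟩ -
    exact ⟨s₁ ∩ t₁, hs₁.inter ht₁, s₂ ∩ t₂, hs₂.inter ht₂, Set.inter_inter_inter_comm _ _ _ _⟩
  induction s, hs using MeasurableSpace.induction_on_inter hgen hpi with
  | empty => simp
  | basic _ hs =>
    obtain ⟨s₁, hs₁, s₂, hs₂, rfl⟩ := hs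
    exact h s₁ s₂ hs₁ hs₂
  | compl t ht iht =>
    have huniv := h Set.univ Set.univ MeasurableSet.univ MeasurableSet.univ
    rw [Set.univ_inter, setIntegral_univ, setIntegral_univ] at huniv
    rw [setIntegral_compl (hle _ ht) hf, setIntegral_compl (hle _ ht) hg, huniv, iht]
  | iUnion t hdisj ht iht =>
    rw [integral_iUnion (fun n => hle _ (ht n)) hdisj hf.integrableOn,
      integral_iUnion (fun n => hle _ (ht n)) hdisj hg.integrableOn]
    exact tsum_congr iht

theorem condExp_sup_eq_of_indep [IsFiniteMeasure μ] {m₁ m₂ mf : MeasurableSpace Ω}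
    (h₁f : m₁ ≤ mf) (hf₀ : mf ≤ m₀) (hm₂ : m₂ ≤ m₀) (hind : Indep mf m₂ μ) {f : Ω → ℝ}
    (hf : StronglyMeasurable[mf] f) (hfi : Integrable f μ) :
    μ[f | m₁ ⊔ m₂] =ᵐ[μ] μ[f | m₁] := by
  have hm₁ : m₁ ≤ m₀ := h₁f.trans hf₀
  have hinter : ∀ h : Ω → ℝ, StronglyMeasurable[mf] h → Integrable h μ →
      ∀ s₁ s₂, MeasurableSet[m₁] s₁ → MeasurableSet[m₂] s₂ →
        ∫ ω in s₁ ∩ s₂, h ω ∂μ = μ.real s₂ * ∫ ω in s₁, h ω ∂μ := by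
    intro h hh hhi s₁ s₂ hs₁ hs₂
    rw [Set.inter_comm, ← setIntegral_indicator (hm₁ _ hs₁),
      setIntegral_eq_measureReal_mul_integral_of_indep hf₀ hm₂ hind
        (hh.indicator (h₁f _ hs₁)) hs₂ (hhi.indicator (hm₁ _ hs₁)),
      integral_indicator (hm₁ _ hs₁)]
  have hmeas : StronglyMeasurable[m₁ ⊔ m₂] (μ[f | m₁]) :=
    stronglyMeasurable_condExp.mono le_sup_left
  refine (ae_eq_condExp_of_forall_setIntegral_eq (sup_le hm₁ hm₂) hfi
    (fun _ _ _ => integrable_condExp.integrableOn) (fun s hs _ => ?_)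
    hmeas.aestronglyMeasurable).symm
  refine setIntegral_eq_of_forall_setIntegral_inter_eq hm₁ hm₂ integrable_condExp hfi
    (fun s₁ s₂ hs₁ hs₂ => ?_) hs
  rw [hinter _ (stronglyMeasurable_condExp.mono h₁f) integrable_condExp s₁ s₂ hs₁ hs₂,
    hinter f hf hfi s₁ s₂ hs₁ hs₂, setIntegral_condExp hm₁ hfi hs₁]

theorem condExp_iSup_comap_eq_of_iIndepFun [IsFiniteMeasure μ] {ι : Type*}
    {β γ : ι → Type*} [∀ i, MeasurableSpace (β i)] [∀ i, MeasurableSpace (γ i)]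
    {X : ∀ i, Ω → β i} (hX : ∀ i, Measurable (X i)) (hind : iIndepFun X μ)
    {ψ : ∀ i, β i → γ i} (hψ : ∀ i, Measurable (ψ i)) (i : ι) {φ : β i → ℝ}
    (hφ : Measurable φ) (hφi : Integrable (φ ∘ X i) μ) :
    μ[φ ∘ X i | ⨆ j, MeasurableSpace.comap (ψ j ∘ X j) inferInstance]
      =ᵐ[μ] μ[φ ∘ X i | MeasurableSpace.comap (ψ i ∘ X i) inferInstance] := by
  have hle : ∀ j, MeasurableSpace.comap (ψ j ∘ X j) inferInstance ≤
      MeasurableSpace.comap (X j) inferInstance := fun j => by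
    rw [← MeasurableSpace.comap_comp]
    exact MeasurableSpace.comap_mono (hψ j).comap_le
  have hothers : Indep (MeasurableSpace.comap (X i) inferInstance)
      (⨆ (j) (_ : j ≠ i), MeasurableSpace.comap (ψ j ∘ X j) inferInstance) μ := by
    have h := indep_iSup_of_disjoint (fun j => (hX j).comap_le) hind.iIndep
      (disjoint_compl_right (a := ({i} : Set ι)))
    refine indep_of_indep_of_le_right (indep_of_indep_of_le_left h ?_)
      (iSup₂_mono fun j _ => hle j)
    exact le_biSup (fun j => MeasurableSpace.comap (X j) inferInstance) rfl
  rw [iSup_split_single _ i]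
  exact condExp_sup_eq_of_indep (hle i) (hX i).comap_le
    (iSup₂_le fun j _ => (hle j).trans (hX j).comap_le) hothers
    (hφ.comp (comap_measurable (X i))).stronglyMeasurable hφi

theorem condExp_potentialOutcome_ae_eq {m : MeasurableSpace Ω}
    (hm : m ≤ m₀) {ι : Type*} [Fintype ι] [MeasurableSpace ι] [MeasurableSingletonClass ι]
    {y : Bool → ι → Ω → ℝ} (hy : ∀ d i, Integrable (y d i) μ) {d : Ω → Bool}
    (hd : Measurable[m] d) {e : Ω → ι} (he : Measurable[m₀] e) (i₀ : ι) :
    μ[fun ω => y (d ω) (e ω) ω | m] =ᵐ[μ] fun ω =>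
      (if d ω then 1 else 0) * μ[fun ω => y true (e ω) ω - y false (e ω) ω | m] ω
        + μ[fun ω => y false (e ω) ω - y false i₀ ω | m] ω + μ[y false i₀ | m] ω := by
  set ind : Ω → ℝ := fun ω => if d ω then 1 else 0
  set Δ₁ : Ω → ℝ := fun ω => y true (e ω) ω - y false (e ω) ω
  set Δ₂ : Ω → ℝ := fun ω => y false (e ω) ω - y false i₀ ω
  have hye : ∀ d', Integrable (fun ω => y d' (e ω) ω) μ :=
    fun d' => integrable_of_finite_index (hy d') he
  have hΔ₁ : Integrable Δ₁ μ := (hye true).sub (hye false)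
  have hΔ₂ : Integrable Δ₂ μ := (hye false).sub (hy false i₀)
  have hind : StronglyMeasurable[m] ind :=
    (Measurable.ite (hd (measurableSet_singleton true)) measurable_const
      measurable_const).stronglyMeasurable
  have hindΔ₁ : Integrable (ind * Δ₁) μ :=
    hΔ₁.bdd_mul (hind.mono hm).aestronglyMeasurable (c := 1)
      (ae_of_all _ fun ω => by by_cases h : d ω <;> simp [ind, h])
  have hsplit : (fun ω => y (d ω) (e ω) ω) = ind * Δ₁ + (Δ₂ + y false i₀) := by
    ext ω
    by_cases h : d ω <;> simp [ind, Δ₁, Δ₂, h]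
  rw [hsplit]
  filter_upwards [condExp_add hindΔ₁ (hΔ₂.add (hy false i₀)) m,
    condExp_mul_of_stronglyMeasurable_left hind hindΔ₁ hΔ₁,
    condExp_add hΔ₂ (hy false i₀) m] with ω h₁ h₂ h₃
  simp only [Pi.add_apply, Pi.mul_apply] at h₁ h₂ h₃
  rw [h₁, h₂, h₃, add_assoc]

theorem ae_forall_condExp_sub_integral_eq_of_increments {m : MeasurableSpace Ω}
    {N : ℕ → Ω → ℝ} (hN : ∀ n, Integrable (N n) μ) {a b : ℕ}
    (h : ∀ n, a ≤ n → n < b →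
      μ[N (n + 1) - N n | m] =ᵐ[μ] fun _ => ∫ ω, (N (n + 1) - N n) ω ∂μ) :
    ∀ᵐ ω ∂μ, ∀ n, a ≤ n → n ≤ b →
      μ[N n | m] ω - ∫ ω, N n ω ∂μ = μ[N a | m] ω - ∫ ω, N a ω ∂μ := by
  have hsucc : ∀ᵐ ω ∂μ, ∀ n, a ≤ n → n < b →
      μ[N (n + 1) | m] ω - ∫ ω, N (n + 1) ω ∂μ = μ[N n | m] ω - ∫ ω, N n ω ∂μ := by
    simp only [ae_all_iff, Filter.eventually_imp_distrib_left]
    intro n han hnb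
    filter_upwards [h n han hnb, condExp_sub (hN (n + 1)) (hN n) m] with ω hω hsub
    rw [hsub, Pi.sub_apply, integral_sub' (hN (n + 1)) (hN n)] at hω
    linarith
  filter_upwards [hsucc] with ω hω n han hnb
  exact Nat.eq_of_forall_succ_eq_of_le (u := fun n => μ[N n | m] ω - ∫ ω, N n ω ∂μ) hω han hnb

end

theorem double_difference_lemma_general
    (G T K : ℕ)
    {Ω : Type} [inst : MeasurableSpace Ω]
    (μ : Measure Ω) [IsProbabilityMeasure μ]
    (po : Fin G → ℕ → Bool → (Fin (K - 1) → Bool) → Ω → ℝ)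
    (hpomeas : ∀ g t d dm, Measurable (po g t d dm))
    (hpoint : ∀ g t d dm, Integrable (po g t d dm) μ)
    (D1 : Fin G → ℕ → Ω → Bool)
    (Dm1 : Fin G → ℕ → Ω → Fin (K - 1) → Bool)
    (hD1meas : ∀ g t, Measurable (D1 g t))
    (hDm1meas : ∀ g t, Measurable (Dm1 g t))
    (Y : Fin G → ℕ → Ω → ℝ)
    (hY : ∀ g t ω, Y g t ω = po g t (D1 g t ω) (Dm1 g t ω) ω)
    -- σ-algebra generated by all treatments 𝐃
    (mD : MeasurableSpace Ω)
    (hmD : mD = MeasurableSpace.comap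
      (fun ω => fun (g : Fin G) (t : ℕ) => (D1 g t ω, Dm1 g t ω)) inferInstance)
    -- σ-algebra generated by group g's own treatments
    (mDg : Fin G → MeasurableSpace Ω)
    (hmDg : ∀ g, mDg g = MeasurableSpace.comap
      (fun ω => fun (t : ℕ) => (D1 g t ω, Dm1 g t ω)) inferInstance)
    -- (i) independent groups
    (hindep : iIndepFun
      (fun (g : Fin G) (ω : Ω) =>
        ((fun (t : ℕ) => (D1 g t ω, Dm1 g t ω)),
         (fun (t : ℕ) (d : Bool) (dm : Fin (K - 1) → Bool) => po g t d dm ω))) μ)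
    -- (ii) strong exogeneity of the never-treated outcome
    (hexo : ∀ g t, 2 ≤ t → t ≤ T →
      μ[fun ω => po g t false (fun _ => false) ω -
          po g (t - 1) false (fun _ => false) ω | mDg g]
        =ᵐ[μ] fun _ => ∫ ω, (po g t false (fun _ => false) ω -
          po g (t - 1) false (fun _ => false) ω) ∂μ)
    -- (iii) common trends of the never-treated outcome
    (hct : ∀ g g' t, 2 ≤ t → t ≤ T →
      ∫ ω, (po g t false (fun _ => false) ω -
        po g (t - 1) false (fun _ => false) ω) ∂μ =
      ∫ ω, (po g' t false (fun _ => false) ω -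
        po g' (t - 1) false (fun _ => false) ω) ∂μ)
    -- effects of the first treatment and of the other treatments
    (Δ1 Δm : Fin G → ℕ → Ω → ℝ)
    (hΔ1 : ∀ g t ω, Δ1 g t ω =
      po g t true (Dm1 g t ω) ω - po g t false (Dm1 g t ω) ω)
    (hΔm : ∀ g t ω, Δm g t ω =
      po g t false (Dm1 g t ω) ω - po g t false (fun _ => false) ω)
    (d1R : Fin G → ℕ → Ω → ℝ)
    (hd1R : ∀ g t ω, d1R g t ω = if D1 g t ω then 1 else 0) :
    ∀ g g' t t', 1 ≤ t → t ≤ T → 1 ≤ t' → t' ≤ T →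
      (fun ω => (μ[Y g t | mD]) ω - (μ[Y g t' | mD]) ω -
        ((μ[Y g' t | mD]) ω - (μ[Y g' t' | mD]) ω))
      =ᵐ[μ] fun ω =>
        (d1R g t ω * (μ[Δ1 g t | mD]) ω + (μ[Δm g t | mD]) ω)
        - (d1R g' t ω * (μ[Δ1 g' t | mD]) ω + (μ[Δm g' t | mD]) ω)
        - (d1R g t' ω * (μ[Δ1 g t' | mD]) ω + (μ[Δm g t' | mD]) ω)
        + (d1R g' t' ω * (μ[Δ1 g' t' | mD]) ω + (μ[Δm g' t' | mD]) ω) := by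
  intro g g' t t' ht₁ htT ht'₁ ht'T
  -- `mD` is a `MeasurableSpace Ω` too; make instance search find `inst` again
  let : MeasurableSpace Ω := inst
  set N : Fin G → ℕ → Ω → ℝ := fun γ τ => po γ τ false (fun _ => false)
  have hN : ∀ γ τ, Integrable (N γ τ) μ := fun γ τ => hpoint γ τ false _
  set X : Fin G → Ω → (ℕ → Bool × (Fin (K - 1) → Bool)) ×
      (ℕ → Bool → (Fin (K - 1) → Bool) → ℝ) :=
    fun γ ω => ((fun τ => (D1 γ τ ω, Dm1 γ τ ω)), fun τ d dm => po γ τ d dm ω)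
  have hX : ∀ γ, Measurable (X γ) := fun γ => by fun_prop
  have hmDX : mD = ⨆ γ, MeasurableSpace.comap (Prod.fst ∘ X γ) inferInstance :=
    hmD.trans (MeasurableSpace.comap_process_pi _)
  have hcell : ∀ γ τ, μ[Y γ τ | mD] =ᵐ[μ] fun ω =>
      (d1R γ τ ω * μ[Δ1 γ τ | mD] ω + μ[Δm γ τ | mD] ω) + μ[N γ τ | mD] ω := by
    intro γ τ
    have hD1 : Measurable[mD] (D1 γ τ) := by
      have hφ : Measurable fun p : Fin G → ℕ → Bool × (Fin (K - 1) → Bool) => (p γ τ).1 := by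
        fun_prop
      exact hmD ▸ hφ.comp (comap_measurable _)
    simp only [funext (hY γ τ), funext (hΔ1 γ τ), funext (hΔm γ τ), funext (hd1R γ τ)]
    exact condExp_potentialOutcome_ae_eq
      (hmDX ▸ iSup_le fun γ => (measurable_fst.comp (hX γ)).comap_le)
      (fun d dm => hpoint γ τ d dm) hD1 (hDm1meas γ τ) _
  have hincr : ∀ γ n, 1 ≤ n → n < T → μ[N γ (n + 1) - N γ n | mD] =ᵐ[μ]
      fun _ => ∫ ω, (N γ (n + 1) - N γ n) ω ∂μ := by
    intro γ n hn hnT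
    have hown := hexo γ (n + 1) (by omega) hnT
    rw [Nat.add_sub_cancel, hmDg γ] at hown
    have hall := condExp_iSup_comap_eq_of_iIndepFun hX hindep (fun _ => measurable_fst) γ
      (φ := fun x => x.2 (n + 1) false (fun _ => false) - x.2 n false (fun _ => false))
      (by fun_prop) ((hN γ (n + 1)).sub (hN γ n))
    rw [← hmDX] at hall
    exact hall.trans hown
  have hmean : ∀ τ, 1 ≤ τ → τ ≤ T →
      ∫ ω, N g τ ω ∂μ - ∫ ω, N g' τ ω ∂μ = ∫ ω, N g 1 ω ∂μ - ∫ ω, N g' 1 ω ∂μ := by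
    refine fun τ => Nat.eq_of_forall_succ_eq_of_le
      (u := fun τ => ∫ ω, N g τ ω ∂μ - ∫ ω, N g' τ ω ∂μ) fun n hn hnT => ?_
    have htrend := hct g g' (n + 1) (by omega) hnT
    rw [Nat.add_sub_cancel, integral_sub (hN _ _) (hN _ _),
      integral_sub (hN _ _) (hN _ _)] at htrend
    linarith
  filter_upwards [hcell g t, hcell g t', hcell g' t, hcell g' t',
    ae_forall_condExp_sub_integral_eq_of_increments (hN g) (hincr g),
    ae_forall_condExp_sub_integral_eq_of_increments (hN g') (hincr g')]
    with ω h₁ h₂ h₃ h₄ hg hg'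
  rw [h₁, h₂, h₃, h₄]
  linarith [hg t ht₁ htT, hg t' ht'₁ ht'T, hg' t ht₁ htT, hg' t' ht'₁ ht'T, hmean t ht₁ htT,
    hmean t' ht'₁ ht'T]

/-- Double-difference lemma (Lemma 2). In a sharp design with a
binary first treatment `D¹` and other treatments `Dm1` valued in `{0,1}^{K−1}`,
under (i) mutual independence across groups of the per-group treatments and
potential outcomes, (ii) strong exogeneity of the never-treated outcome with
respect to the group's own treatment path, and (iii) common trends of the
never-treated outcome, the conditional (on all treatments `𝐃`) double
difference of observed outcomes equals the signed sum over the four cells of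
`D¹·E[Δ¹|𝐃] + E[Δ^{-1}|𝐃]`. Time runs over `{1,...,T}`. -/
theorem double_difference_lemma
    (G T K : ℕ) (hT : 1 ≤ T) (hK : 1 ≤ K)
    {Ω : Type} [inst : MeasurableSpace Ω]
    (μ : Measure Ω) [IsProbabilityMeasure μ]
    (po : Fin G → ℕ → Bool → (Fin (K - 1) → Bool) → Ω → ℝ)
    (hpomeas : ∀ g t d dm, Measurable (po g t d dm))
    (hpoint : ∀ g t d dm, Integrable (po g t d dm) μ)
    (D1 : Fin G → ℕ → Ω → Bool)
    (Dm1 : Fin G → ℕ → Ω → Fin (K - 1) → Bool)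
    (hD1meas : ∀ g t, Measurable (D1 g t))
    (hDm1meas : ∀ g t, Measurable (Dm1 g t))
    (Y : Fin G → ℕ → Ω → ℝ)
    (hY : ∀ g t ω, Y g t ω = po g t (D1 g t ω) (Dm1 g t ω) ω)
    -- σ-algebra generated by all treatments 𝐃
    (mD : MeasurableSpace Ω)
    (hmD : mD = MeasurableSpace.comap
      (fun ω => fun (g : Fin G) (t : ℕ) => (D1 g t ω, Dm1 g t ω)) inferInstance)
    -- σ-algebra generated by group g's own treatments
    (mDg : Fin G → MeasurableSpace Ω)
    (hmDg : ∀ g, mDg g = MeasurableSpace.comap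
      (fun ω => fun (t : ℕ) => (D1 g t ω, Dm1 g t ω)) inferInstance)
    -- (i) independent groups
    (hindep : iIndepFun
      (fun (g : Fin G) (ω : Ω) =>
        ((fun (t : ℕ) => (D1 g t ω, Dm1 g t ω)),
         (fun (t : ℕ) (d : Bool) (dm : Fin (K - 1) → Bool) => po g t d dm ω))) μ)
    -- (ii) strong exogeneity of the never-treated outcome
    (hexo : ∀ g t, 2 ≤ t → t ≤ T →
      μ[fun ω => po g t false (fun _ => false) ω -
          po g (t - 1) false (fun _ => false) ω | mDg g]
        =ᵐ[μ] fun _ => ∫ ω, (po g t false (fun _ => false) ω -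
          po g (t - 1) false (fun _ => false) ω) ∂μ)
    -- (iii) common trends of the never-treated outcome
    (hct : ∀ g g' t, 2 ≤ t → t ≤ T →
      ∫ ω, (po g t false (fun _ => false) ω -
        po g (t - 1) false (fun _ => false) ω) ∂μ =
      ∫ ω, (po g' t false (fun _ => false) ω -
        po g' (t - 1) false (fun _ => false) ω) ∂μ)
    -- effects of the first treatment and of the other treatments
    (Δ1 Δm : Fin G → ℕ → Ω → ℝ)
    (hΔ1 : ∀ g t ω, Δ1 g t ω =
      po g t true (Dm1 g t ω) ω - po g t false (Dm1 g t ω) ω)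
    (hΔm : ∀ g t ω, Δm g t ω =
      po g t false (Dm1 g t ω) ω - po g t false (fun _ => false) ω)
    (d1R : Fin G → ℕ → Ω → ℝ)
    (hd1R : ∀ g t ω, d1R g t ω = if D1 g t ω then 1 else 0) :
    ∀ g g' t t', 1 ≤ t → t ≤ T → 1 ≤ t' → t' ≤ T →
      (fun ω => (μ[Y g t | mD]) ω - (μ[Y g t' | mD]) ω -
        ((μ[Y g' t | mD]) ω - (μ[Y g' t' | mD]) ω))
      =ᵐ[μ] fun ω =>
        (d1R g t ω * (μ[Δ1 g t | mD]) ω + (μ[Δm g t | mD]) ω)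
        - (d1R g' t ω * (μ[Δ1 g' t | mD]) ω + (μ[Δm g' t | mD]) ω)
        - (d1R g t' ω * (μ[Δ1 g t' | mD]) ω + (μ[Δm g t' | mD]) ω)
        + (d1R g' t' ω * (μ[Δ1 g' t' | mD]) ω + (μ[Δm g' t' | mD]) ω) :=
  double_difference_lemma_general G T K (inst := inst) μ po hpomeas hpoint D1 Dm1 hD1meas hDm1meas Y
    hY mD hmD mDg hmDg hindep hexo hct Δ1 Δm hΔ1 hΔm d1R hd1R
end

section
/- Under the assumptions of the preceding double-difference lemma, the TWFE coefficient β_fe = E[β̂_fe], where β̂_fe is the coefficient on D^1_{g,t} in the weighted OLS regression of Y_{g,t} on group fixed effects, time fixed effects, and (D^1_{g,t}, D^{-1}_{g,t}) with weights N_{g,t}, satisfies β_fe = E[ Σ_{(g,t): D^1_{g,t}=1} (N_{g,t}/N_1) w_{g,t} Δ^1_{g,t}(D^{-1}_{g,t}) + Σ_{(g,t): D^{-1}_{g,t} ≠ 𝟎} (N_{g,t}/N_1) w_{g,t} Δ^{-1}_{g,t} ], where N_1 = Σ_{(g,t):D^1_{g,t}=1} N_{g,t}, w_{g,t} = ε_{g,t}/Σ_{(g,t):D^1_{g,t}=1}(N_{g,t}/N_1)ε_{g,t},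 and ε_{g,t} is the residual of the weighted regression of D^1 on group dummies, time dummies and D^{-1}. Moreover Σ_{(g,t):D^1_{g,t}=1}(N_{g,t}/N_1) w_{g,t} = 1. -/
/-!
By the Frisch–Waugh theorem, `β̂ = ∑ W_{g,t} Y_{g,t}` with `W = N ε / ∑ N ε D¹`. Since
`Y − Y(0,𝟎) = D¹ Δ¹ + Δ⁻¹`, this makes `β̂` minus the weighted sum of effects equal to
`∑ W_{g,t} Y_{g,t}(0,𝟎)`. The residual `ε` is orthogonal to the group and period dummies, so the
weights `W` sum to zero within each group and within each period, and they depend on the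
realization only through the (finitely valued) treatment design. Independence across groups and
strong exogeneity make every trend `Y_{g,s}(0,𝟎) − Y_{g,s−1}(0,𝟎)` mean independent of the whole
design, and common trends make its mean `λ_s` the same for all groups. Hence
`E[W_{g,t} Y_{g,t}(0,𝟎)] = E[W_{g,t} Y_{g,1}(0,𝟎)] + (∑_{s ≤ t} λ_s) E[W_{g,t}]`, and both terms
vanish after summing over `t` and over `g` respectively.
-/

open Finset MeasureTheory ProbabilityTheory

lemma eq_zero_of_forall_mul_add_sq_mul_nonneg {L Q : ℝ} (h : ∀ c : ℝ, 0 ≤ c * L + c ^ 2 * Q) :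
    L = 0 := by
  have hmin : IsLocalMin (fun c : ℝ => c * L + c ^ 2 * Q) 0 :=
    Filter.Eventually.of_forall fun c => by simpa using h c
  have hderiv : HasDerivAt (fun c : ℝ => c * L + c ^ 2 * Q) L 0 := by
    simpa using ((hasDerivAt_id' (0 : ℝ)).mul_const L).fun_add
      ((hasDerivAt_pow 2 (0 : ℝ)).mul_const Q)
  exact hmin.hasDerivAt_eq_zero hderiv

section LeastSquares

variable {ι P : Type*} [AddCommGroup P] [Module ℝ P]

def IsLeastSquares (s : Finset ι) (N : ι → ℝ) (L : P →ₗ[ℝ] ι → ℝ) (y : ι → ℝ) (p : P) : Prop :=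
  ∀ p', ∑ i ∈ s, N i * (y i - L p i) ^ 2 ≤ ∑ i ∈ s, N i * (y i - L p' i) ^ 2

variable {s : Finset ι} {N : ι → ℝ} {L : P →ₗ[ℝ] ι → ℝ} {y : ι → ℝ} {p : P}

theorem IsLeastSquares.sum_mul_residual_mul_eq_zero (h : IsLeastSquares s N L y p) (q : P) :
    ∑ i ∈ s, N i * (y i - L p i) * L q i = 0 := by
  have hexpand : ∀ c : ℝ, ∑ i ∈ s, N i * (y i - L (p + c • q) i) ^ 2 =
      ∑ i ∈ s, N i * (y i - L p i) ^ 2 + (c * (-2 * ∑ i ∈ s, N i * (y i - L p i) * L q i)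
        + c ^ 2 * ∑ i ∈ s, N i * L q i ^ 2) := fun c => by
    simp only [map_add, map_smul, Pi.add_apply, Pi.smul_apply, smul_eq_mul, Finset.mul_sum,
      ← Finset.sum_add_distrib]
    exact Finset.sum_congr rfl fun i _ => by ring
  have := eq_zero_of_forall_mul_add_sq_mul_nonneg fun c =>
    le_add_iff_nonneg_right _ |>.1 <| (h (p + c • q)).trans_eq (hexpand c)
  linarith

theorem IsLeastSquares.congr {L' : P →ₗ[ℝ] ι → ℝ} {y' : ι → ℝ} (h : IsLeastSquares s N L y p)
    (hy : ∀ i ∈ s, y i = y' i) (hL : ∀ q, ∀ i ∈ s, L q i = L' q i) :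
    IsLeastSquares s N L' y' p := by
  have hsum : ∀ q, ∑ i ∈ s, N i * (y i - L q i) ^ 2 = ∑ i ∈ s, N i * (y' i - L' q i) ^ 2 :=
    fun q => Finset.sum_congr rfl fun i hi => by rw [hy i hi, hL q i hi]
  exact fun p' => by simpa only [hsum] using h p'

theorem IsLeastSquares.apply_eq (hN : ∀ i ∈ s, 0 < N i) {p' : P} (h : IsLeastSquares s N L y p)
    (h' : IsLeastSquares s N L y p') : ∀ i ∈ s, L p i = L p' i := by
  -- `L (p - p')` is the difference of the two residuals and is orthogonal to both
  have hsq : ∑ i ∈ s, N i * L (p - p') i ^ 2 = ∑ i ∈ s, N i * (y i - L p' i) * L (p - p') i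
      - ∑ i ∈ s, N i * (y i - L p i) * L (p - p') i := by
    rw [← Finset.sum_sub_distrib]
    refine Finset.sum_congr rfl fun i _ => ?_
    simp only [map_sub, Pi.sub_apply]
    ring
  rw [h.sum_mul_residual_mul_eq_zero, h'.sum_mul_residual_mul_eq_zero, sub_zero] at hsq
  intro i hi
  have := (Finset.sum_eq_zero_iff_of_nonneg fun j hj => by
    have := hN j hj; positivity).1 hsq i hi
  simpa [sub_eq_zero, (hN i hi).ne'] using this

theorem IsLeastSquares.residual_eq_of_eqOn (hN : ∀ i ∈ s, 0 < N i) {L' : P →ₗ[ℝ] ι → ℝ}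
    {y' : ι → ℝ} {p' : P} (h : IsLeastSquares s N L y p) (h' : IsLeastSquares s N L' y' p')
    (hy : ∀ i ∈ s, y i = y' i) (hL : ∀ q, ∀ i ∈ s, L q i = L' q i) :
    ∀ i ∈ s, y i - L p i = y' i - L' p' i := by
  have h'' : IsLeastSquares s N L y p' :=
    h'.congr (fun i hi => (hy i hi).symm) fun q i hi => (hL q i hi).symm
  intro i hi
  rw [h.apply_eq hN h'' i hi, hy i hi, hL p' i hi]

theorem IsLeastSquares.frisch_waugh {x : ι → ℝ} {b : ℝ} {p₀ : P}
    (hlong : IsLeastSquares s N ((LinearMap.toSpanSingleton ℝ _ x).coprod L) y (b, p))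
    (hfirst : IsLeastSquares s N L x p₀) :
    ∑ i ∈ s, N i * (x i - L p₀ i) * y i = b * ∑ i ∈ s, N i * (x i - L p₀ i) * x i := by
  have hx := hlong.sum_mul_residual_mul_eq_zero (1, 0)
  have hp₀ := hlong.sum_mul_residual_mul_eq_zero (0, p₀)
  have hp := hfirst.sum_mul_residual_mul_eq_zero p
  simp only [LinearMap.coprod_apply, LinearMap.toSpanSingleton_apply, one_smul, map_zero,
    Pi.add_apply, Pi.smul_apply, Pi.zero_apply, smul_eq_mul, add_zero, zero_add] at hx hp₀
  have hsplit : ∑ i ∈ s, N i * (x i - L p₀ i) * y i - b * ∑ i ∈ s, N i * (x i - L p₀ i) * x i =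
      ∑ i ∈ s, N i * (y i - (b * x i + L p i)) * x i
        - ∑ i ∈ s, N i * (y i - (b * x i + L p i)) * L p₀ i
        + ∑ i ∈ s, N i * (x i - L p₀ i) * L p i := by
    rw [Finset.mul_sum, ← Finset.sum_sub_distrib, ← Finset.sum_sub_distrib,
      ← Finset.sum_add_distrib]
    exact Finset.sum_congr rfl fun i _ => by ring
  rw [hx, hp₀, hp] at hsplit
  linarith

end LeastSquares

section TwoWayFixedEffects

variable {κ β ρ : Type*} [Fintype ρ]

@[simps]
def twfeFit (x : ρ → κ → β → ℝ) : (ℝ × (κ → ℝ) × (β → ℝ) × (ρ → ℝ)) →ₗ[ℝ] κ × β → ℝ where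
  toFun p i := p.1 + p.2.1 i.1 + p.2.2.1 i.2 + ∑ k, p.2.2.2 k * x k i.1 i.2
  map_add' p q := by
    ext i
    simp only [Prod.fst_add, Prod.snd_add, Pi.add_apply, add_mul, Finset.sum_add_distrib]
    ring
  map_smul' c p := by
    ext i
    simp only [Prod.smul_fst, Prod.smul_snd, Pi.smul_apply, smul_eq_mul, RingHom.id_apply,
      mul_assoc, ← Finset.mul_sum]
    ring

variable [Fintype κ]

/-- The weight of cell `(g, t)` in the Frisch–Waugh expression of the coefficient on `d`, where
`r` is the residual of `d` on the other regressors. -/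
noncomputable def twfeWeight (τ : Finset β) (N d r : κ → β → ℝ) (g : κ) (t : β) : ℝ :=
  N g t * r g t / ∑ g', ∑ t' ∈ τ, N g' t' * r g' t' * d g' t'

variable {τ : Finset β} {x : ρ → κ → β → ℝ} {N y d r : κ → β → ℝ} {a b : ℝ} {c : κ → ℝ}
  {v : β → ℝ} {z : ρ → ℝ} {p : ℝ × (κ → ℝ) × (β → ℝ) × (ρ → ℝ)}

theorem twfeFit_congr {x' : ρ → κ → β → ℝ} (hx : ∀ k g, ∀ t ∈ τ, x k g t = x' k g t)
    (q : ℝ × (κ → ℝ) × (β → ℝ) × (ρ → ℝ)) : ∀ i ∈ univ ×ˢ τ, twfeFit x q i = twfeFit x' q i := by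
  rintro ⟨g, t⟩ hi
  simp only [twfeFit_apply, hx _ g t (Finset.mem_product.1 hi).2]

theorem isLeastSquares_twfeFit
    (h : ∀ (a' : ℝ) (c' : κ → ℝ) (v' : β → ℝ) (z' : ρ → ℝ),
      ∑ g, ∑ t ∈ τ, N g t * (y g t - a - c g - v t - ∑ k, z k * x k g t) ^ 2 ≤
      ∑ g, ∑ t ∈ τ, N g t * (y g t - a' - c' g - v' t - ∑ k, z' k * x k g t) ^ 2) :
    IsLeastSquares (univ ×ˢ τ) (Function.uncurry N) (twfeFit x) (Function.uncurry y)
      (a, c, v, z) := by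
  have hsub : ∀ r a c v z : ℝ, r - (a + c + v + z) = r - a - c - v - z := by intros; ring
  rintro ⟨a', c', v', z'⟩
  simpa only [Finset.sum_product, Function.uncurry_apply_pair, twfeFit_apply, hsub] using
    h a' c' v' z'

theorem isLeastSquares_twfe_long
    (h : ∀ (a' b' : ℝ) (c' : κ → ℝ) (v' : β → ℝ) (z' : ρ → ℝ),
      ∑ g, ∑ t ∈ τ, N g t * (y g t - a - c g - v t - b * d g t - ∑ k, z k * x k g t) ^ 2 ≤
      ∑ g, ∑ t ∈ τ, N g t * (y g t - a' - c' g - v' t - b' * d g t - ∑ k, z' k * x k g t) ^ 2) :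
    IsLeastSquares (univ ×ˢ τ) (Function.uncurry N)
      ((LinearMap.toSpanSingleton ℝ _ (Function.uncurry d)).coprod (twfeFit x))
      (Function.uncurry y) (b, a, c, v, z) := by
  have hsub : ∀ r a b c v z : ℝ, r - (b + (a + c + v + z)) = r - a - c - v - b - z := by
    intros; ring
  rintro ⟨b', a', c', v', z'⟩
  simpa only [Finset.sum_product, Function.uncurry_apply_pair, LinearMap.coprod_apply,
    LinearMap.toSpanSingleton_apply, Pi.add_apply, Pi.smul_apply, smul_eq_mul, twfeFit_apply,
    hsub] using h a' b' c' v' z'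

namespace IsLeastSquares

theorem sum_twfeWeight_group
    (h : IsLeastSquares (univ ×ˢ τ) (Function.uncurry N) (twfeFit x) (Function.uncurry d) p)
    (hr : ∀ g t, r g t = d g t - twfeFit x p (g, t)) (g : κ) :
    ∑ t ∈ τ, twfeWeight τ N d r g t = 0 := by
  classical
  have hsum : ∑ t ∈ τ, N g t * r g t = 0 := by
    have := h.sum_mul_residual_mul_eq_zero (0, Pi.single g 1, 0, 0)
    simp only [Finset.sum_product, Function.uncurry_apply_pair, ← hr] at this
    simpa [Pi.single_apply] using this
  simp only [twfeWeight, ← Finset.sum_div, hsum, zero_div]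

theorem sum_twfeWeight_period
    (h : IsLeastSquares (univ ×ˢ τ) (Function.uncurry N) (twfeFit x) (Function.uncurry d) p)
    (hr : ∀ g t, r g t = d g t - twfeFit x p (g, t)) {t : β}
    (ht : t ∈ τ) : ∑ g, twfeWeight τ N d r g t = 0 := by
  classical
  have hsum : ∑ g, N g t * r g t = 0 := by
    have := h.sum_mul_residual_mul_eq_zero (0, 0, Pi.single t 1, 0)
    simp only [Finset.sum_product, Function.uncurry_apply_pair, ← hr] at this
    simpa [Pi.single_apply, ht] using this
  simp only [twfeWeight, ← Finset.sum_div, hsum, zero_div]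

theorem twfe_frisch_waugh
    (h : IsLeastSquares (univ ×ˢ τ) (Function.uncurry N) (twfeFit x) (Function.uncurry d) p)
    (hr : ∀ g t, r g t = d g t - twfeFit x p (g, t))
    {q : ℝ × (κ → ℝ) × (β → ℝ) × (ρ → ℝ)} (hlong : IsLeastSquares (univ ×ˢ τ) (Function.uncurry N)
      ((LinearMap.toSpanSingleton ℝ _ (Function.uncurry d)).coprod (twfeFit x))
      (Function.uncurry y) (b, q))
    (hden : ∑ g, ∑ t ∈ τ, N g t * r g t * d g t ≠ 0) :
    b = ∑ g, ∑ t ∈ τ, twfeWeight τ N d r g t * y g t := by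
  have hfw := hlong.frisch_waugh h
  simp only [Finset.sum_product, Function.uncurry_apply_pair, ← hr] at hfw
  simp only [twfeWeight, div_mul_eq_mul_div, ← Finset.sum_div, hfw, mul_div_cancel_right₀ _ hden]

theorem twfeWeight_eq_of_eqOn
    (h : IsLeastSquares (univ ×ˢ τ) (Function.uncurry N) (twfeFit x) (Function.uncurry d) p)
    (hr : ∀ g t, r g t = d g t - twfeFit x p (g, t))
    (hN : ∀ g, ∀ t ∈ τ, 0 < N g t) {x' : ρ → κ → β → ℝ}
    {d' r' : κ → β → ℝ} {p' : ℝ × (κ → ℝ) × (β → ℝ) × (ρ → ℝ)}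
    (h' : IsLeastSquares (univ ×ˢ τ) (Function.uncurry N) (twfeFit x') (Function.uncurry d') p')
    (hr' : ∀ g t, r' g t = d' g t - twfeFit x' p' (g, t)) (hd : ∀ g, ∀ t ∈ τ, d g t = d' g t)
    (hx : ∀ k g, ∀ t ∈ τ, x k g t = x' k g t) (g : κ) {t : β} (ht : t ∈ τ) :
    twfeWeight τ N d r g t = twfeWeight τ N d' r' g t := by
  have hrr' : ∀ g, ∀ t ∈ τ, r g t = r' g t := fun g t ht => by
    rw [hr, hr']
    exact h.residual_eq_of_eqOn (fun i hi => hN i.1 i.2 (Finset.mem_product.1 hi).2) h'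
      (fun i hi => hd i.1 i.2 (Finset.mem_product.1 hi).2) (twfeFit_congr hx) (g, t)
      (Finset.mem_product.2 ⟨Finset.mem_univ g, ht⟩)
  simp only [twfeWeight, hrr' g t ht]
  congr 1
  exact Finset.sum_congr rfl fun g _ => Finset.sum_congr rfl fun t ht => by
    rw [hrr' g t ht, hd g t ht]

end IsLeastSquares

end TwoWayFixedEffects

lemma Finset.sum_mul_eq_zero_of_forall_eq {κ : Type*} [Fintype κ] {a b : κ → ℝ}
    (ha : ∀ i j, a i = a j) (hb : ∑ i, b i = 0) : ∑ i, a i * b i = 0 := by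
  rcases isEmpty_or_nonempty κ with _ | ⟨⟨i₀⟩⟩
  · simp
  · rw [Finset.sum_congr rfl fun i _ => by rw [ha i i₀], ← Finset.mul_sum, hb, mul_zero]

section MeanIndependence

variable {Ω : Type*} {m : MeasurableSpace Ω} [mΩ : MeasurableSpace Ω] {μ : Measure Ω}

lemma setIntegral_eq_mul_measureReal_of_condExp_eq_const (hm : m ≤ mΩ)
    [SigmaFinite (μ.trim hm)] {f : Ω → ℝ} (hf : Integrable f μ) {a : ℝ}
    (hc : μ[f|m] =ᵐ[μ] fun _ => a) {S : Set Ω} (hS : MeasurableSet[m] S) :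
    ∫ ω in S, f ω ∂μ = a * μ.real S := by
  rw [← setIntegral_condExp hm hf hS, setIntegral_congr_ae (hm S hS) (hc.mono fun _ h _ => h),
    setIntegral_const, smul_eq_mul, mul_comm]

lemma integral_mul_sub_eq_sum_Ico {G : Ω → ℝ} {y : ℕ → Ω → ℝ}
    (hy : ∀ s, Integrable (fun ω => G ω * y s ω) μ) {n₀ n : ℕ} (hn : n₀ ≤ n) :
    ∫ ω, G ω * (y n ω - y n₀ ω) ∂μ = ∑ s ∈ Ico n₀ n, ∫ ω, G ω * (y (s + 1) ω - y s ω) ∂μ := by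
  rw [← integral_finsetSum _ fun s _ => ((hy (s + 1)).sub (hy s)).congr
    (ae_of_all _ fun ω => (mul_sub _ _ _).symm)]
  congr 1 with ω
  rw [← Finset.mul_sum, Finset.sum_Ico_sub (fun s => y s ω) hn]

lemma integral_sub_eq_sum_Ico {y : ℕ → Ω → ℝ} (hy : ∀ s, Integrable (y s) μ) {n₀ n : ℕ}
    (hn : n₀ ≤ n) :
    ∫ ω, (y n ω - y n₀ ω) ∂μ = ∑ s ∈ Ico n₀ n, ∫ ω, (y (s + 1) ω - y s ω) ∂μ := by
  simpa using integral_mul_sub_eq_sum_Ico (G := fun _ => 1) (by simpa using hy) hn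

lemma integral_sub_one_eq_of_forall_step {T : ℕ} {y y' : ℕ → Ω → ℝ}
    (hy : ∀ s, Integrable (y s) μ) (hy' : ∀ s, Integrable (y' s) μ)
    (hstep : ∀ s, 2 ≤ s → s ≤ T →
      ∫ ω, (y s ω - y (s - 1) ω) ∂μ = ∫ ω, (y' s ω - y' (s - 1) ω) ∂μ)
    {t : ℕ} (ht : t ∈ Icc 1 T) : ∫ ω, (y t ω - y 1 ω) ∂μ = ∫ ω, (y' t ω - y' 1 ω) ∂μ := by
  rw [Finset.mem_Icc] at ht
  rw [integral_sub_eq_sum_Ico hy ht.1, integral_sub_eq_sum_Ico hy' ht.1]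
  refine Finset.sum_congr rfl fun s hs => ?_
  rw [Finset.mem_Ico] at hs
  simpa using hstep (s + 1) (by omega) (by omega)

variable {γ : Type*} [MeasurableSpace γ] [MeasurableSingletonClass γ] {D : Ω → γ}

lemma MeasureTheory.Integrable.comp_finite_mul [IsFiniteMeasure μ] [Finite γ] (hD : Measurable D)
    (F : γ → ℝ) {f : Ω → ℝ} (hf : Integrable f μ) : Integrable (fun ω => F (D ω) * f ω) μ := by
  obtain ⟨C, hC⟩ := (Set.finite_range fun c => ‖F c‖).bddAbove
  exact hf.bdd_mul ((measurable_of_finite F).comp hD).aestronglyMeasurable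
    (ae_of_all _ fun ω => hC ⟨D ω, rfl⟩)

lemma integral_comp_mul_eq_sum [IsFiniteMeasure μ] [Fintype γ] (hD : Measurable D) (F : γ → ℝ)
    {f : Ω → ℝ} (hf : Integrable f μ) :
    ∫ ω, F (D ω) * f ω ∂μ = ∑ c, F c * ∫ ω in D ⁻¹' {c}, f ω ∂μ := by
  have hcover : ⋃ c, D ⁻¹' {c} = Set.univ := by
    rw [← Set.preimage_iUnion, Set.iUnion_of_singleton, Set.preimage_univ]
  rw [← setIntegral_univ, ← hcover,
    integral_iUnion_fintype (fun c => hD (measurableSet_singleton c)) (pairwise_disjoint_fiber D)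
      fun c => (hf.comp_finite_mul hD F).integrableOn]
  refine Finset.sum_congr rfl fun c _ => ?_
  rw [← integral_const_mul]
  exact setIntegral_congr_fun (hD (measurableSet_singleton c)) fun ω hω => by
    simp only [Set.mem_preimage, Set.mem_singleton_iff] at hω
    rw [hω]

theorem integral_comp_mul_eq_mul_integral_comp [IsFiniteMeasure μ] [Fintype γ]
    (hD : Measurable D) {f : Ω → ℝ} (hf : Integrable f μ) {a : ℝ}
    (hfib : ∀ c, ∫ ω in D ⁻¹' {c}, f ω ∂μ = a * μ.real (D ⁻¹' {c})) (F : γ → ℝ) :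
    ∫ ω, F (D ω) * f ω ∂μ = a * ∫ ω, F (D ω) ∂μ := by
  have hone := integral_comp_mul_eq_sum (μ := μ) hD F (integrable_const (1 : ℝ))
  simp only [mul_one, setIntegral_const, smul_eq_mul] at hone
  rw [integral_comp_mul_eq_sum hD F hf, hone, Finset.mul_sum]
  exact Finset.sum_congr rfl fun c _ => by rw [hfib]; ring

theorem integral_comp_mul_sub_one_eq_of_forall_step [IsFiniteMeasure μ] [Finite γ]
    (hD : Measurable D) {T : ℕ} {y : ℕ → Ω → ℝ} (hy : ∀ s, Integrable (y s) μ)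
    (hstep : ∀ s, 2 ≤ s → s ≤ T → ∀ F : γ → ℝ,
      ∫ ω, F (D ω) * (y s ω - y (s - 1) ω) ∂μ =
        (∫ ω, (y s ω - y (s - 1) ω) ∂μ) * ∫ ω, F (D ω) ∂μ)
    {t : ℕ} (ht : t ∈ Icc 1 T) (F : γ → ℝ) :
    ∫ ω, F (D ω) * (y t ω - y 1 ω) ∂μ = (∫ ω, (y t ω - y 1 ω) ∂μ) * ∫ ω, F (D ω) ∂μ := by
  rw [Finset.mem_Icc] at ht
  rw [integral_mul_sub_eq_sum_Ico (fun s => (hy s).comp_finite_mul hD F) ht.1,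
    integral_sub_eq_sum_Ico hy ht.1, Finset.sum_mul]
  refine Finset.sum_congr rfl fun s hs => ?_
  rw [Finset.mem_Ico] at hs
  simpa using hstep (s + 1) (by omega) (by omega) F

lemma ProbabilityTheory.Indep.setIntegral_preimage_inter {E : Type*} [mE : MeasurableSpace E]
    (hm : m ≤ mΩ) {X : Ω → E} (hind : Indep m (mE.comap X) μ)
    (hX : Measurable X) {S : Set E} (hS : MeasurableSet S) {B : Set Ω} (hB : MeasurableSet[m] B)
    {f : E → ℝ} (hf : Measurable f) :
    ∫ ω in X ⁻¹' S ∩ B, f (X ω) ∂μ = μ.real B * ∫ ω in X ⁻¹' S, f (X ω) ∂μ := by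
  have hind' := hind.setIntegral_eq_mul hm hX.aemeasurable hB (hf.indicator hS).aestronglyMeasurable
  rwa [← integral_indicator (hX hS), Set.inter_comm, ← setIntegral_indicator (hX hS)]

theorem ProbabilityTheory.iIndepFun.integral_comp_mul_eq_mul_integral_comp [IsFiniteMeasure μ]
    {κ E α : Type*} [Fintype κ] [MeasurableSpace E] [Fintype α] [MeasurableSpace α]
    [MeasurableSingletonClass α] {X : κ → Ω → E} (hX : ∀ i, Measurable (X i))
    (hind : iIndepFun X μ) {c : E → α} (hc : Measurable c) {f : E → ℝ} (hf : Measurable f)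
    {g : κ} (hfi : Integrable (fun ω => f (X g ω)) μ) (hm : m ≤ mΩ) [SigmaFinite (μ.trim hm)]
    (hcm : Measurable[m] fun ω => c (X g ω)) {a : ℝ}
    (hexo : μ[fun ω => f (X g ω)|m] =ᵐ[μ] fun _ => a) (F : (κ → α) → ℝ) :
    ∫ ω, F (fun i => c (X i ω)) * f (X g ω) ∂μ = a * ∫ ω, F (fun i => c (X i ω)) ∂μ := by
  classical
  set mX : κ → MeasurableSpace Ω := fun i => MeasurableSpace.comap (X i) inferInstance
  have hmX : ∀ i, mX i ≤ mΩ := fun i => (hX i).comap_le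
  have hind' : Indep (⨆ i ∈ ({g}ᶜ : Set κ), mX i) (mX g) μ :=
    indep_of_indep_of_le_right (indep_iSup_of_disjoint hmX ((iIndepFun_iff_iIndep _ _ _).1 hind)
      disjoint_compl_left) (le_iSup₂ (f := fun i (_ : i ∈ ({g} : Set κ)) => mX i) g rfl)
  refine _root_.integral_comp_mul_eq_mul_integral_comp (D := fun ω i => c (X i ω))
    (measurable_pi_lambda _ fun i => hc.comp (hX i)) hfi (fun φ => ?_) F
  -- a fiber of the design is an event of group `g` intersected with an event of the others
  set B : Set Ω := {ω | ∀ i ∈ ({g}ᶜ : Set κ), c (X i ω) = φ i}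
  have hfiber : (fun ω i => c (X i ω)) ⁻¹' {φ} = X g ⁻¹' (c ⁻¹' {φ g}) ∩ B := by
    ext ω
    simp only [Set.mem_preimage, Set.mem_singleton_iff, Set.mem_inter_iff, B, Set.mem_ofPred_eq,
      Set.mem_compl_iff]
    refine ⟨fun h => ⟨congrFun h g, fun i _ => congrFun h i⟩, fun ⟨hg, hi⟩ => funext fun i => ?_⟩
    by_cases hig : i = g
    · exact hig ▸ hg
    · exact hi i hig
  have hB : MeasurableSet[⨆ i ∈ ({g}ᶜ : Set κ), mX i] B := by
    simp only [B, Set.ofPred_forall]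
    exact .iInter fun i => .iInter fun hi =>
      le_iSup₂ (f := fun i (_ : i ∈ ({g}ᶜ : Set κ)) => mX i) i hi _
        ⟨c ⁻¹' {φ i}, hc (measurableSet_singleton _), rfl⟩
  have hAB := hind'.setIntegral_preimage_inter (iSup₂_le fun i _ => hmX i) (hX g)
    (hc (measurableSet_singleton (φ g))) hB measurable_const (f := fun _ => (1 : ℝ))
  simp only [setIntegral_const, smul_eq_mul, mul_one] at hAB
  rw [hfiber, hind'.setIntegral_preimage_inter (iSup₂_le fun i _ => hmX i) (hX g)
    (hc (measurableSet_singleton (φ g))) hB hf,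
    setIntegral_eq_mul_measureReal_of_condExp_eq_const hm hfi hexo
      (S := X g ⁻¹' (c ⁻¹' {φ g})) (hcm (measurableSet_singleton _)),
    hAB]
  ring

theorem integral_sum_sum_mul_eq_zero_of_parallel_trends [IsFiniteMeasure μ] {κ : Type*}
    [Fintype κ] [Fintype γ] (hD : Measurable D) {T : ℕ} {W Y0 : κ → ℕ → Ω → ℝ}
    (hWD : ∀ g, ∀ t ∈ Icc 1 T, Function.FactorsThrough (W g t) D)
    (hrow : ∀ g ω, ∑ t ∈ Icc 1 T, W g t ω = 0) (hcol : ∀ t ∈ Icc 1 T, ∀ ω, ∑ g, W g t ω = 0)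
    (hY0 : ∀ g t, Integrable (Y0 g t) μ)
    (hmean : ∀ g s, 2 ≤ s → s ≤ T → ∀ F : γ → ℝ,
      ∫ ω, F (D ω) * (Y0 g s ω - Y0 g (s - 1) ω) ∂μ =
        (∫ ω, (Y0 g s ω - Y0 g (s - 1) ω) ∂μ) * ∫ ω, F (D ω) ∂μ)
    (htrend : ∀ g g' s, 2 ≤ s → s ≤ T →
      ∫ ω, (Y0 g s ω - Y0 g (s - 1) ω) ∂μ = ∫ ω, (Y0 g' s ω - Y0 g' (s - 1) ω) ∂μ) :
    ∫ ω, ∑ g, ∑ t ∈ Icc 1 T, W g t ω * Y0 g t ω ∂μ = 0 := by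
  have hW : ∀ g, ∀ t ∈ Icc 1 T, W g t = fun ω => Function.extend D (W g t) 0 (D ω) :=
    fun g t ht => funext fun ω => ((hWD g t ht).extend_apply 0 ω).symm
  have hWint : ∀ g, ∀ t ∈ Icc 1 T, ∀ {f : Ω → ℝ}, Integrable f μ →
      Integrable (fun ω => W g t ω * f ω) μ := fun g t ht f hf => by
    rw [hW g t ht]; exact hf.comp_finite_mul hD _
  set Λ : κ → ℕ → ℝ := fun g t => ∫ ω, (Y0 g t ω - Y0 g 1 ω) ∂μ
  have hsplit : ∀ g, ∀ t ∈ Icc 1 T,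
      ∫ ω, W g t ω * Y0 g t ω ∂μ = ∫ ω, W g t ω * Y0 g 1 ω ∂μ + Λ g t * ∫ ω, W g t ω ∂μ := by
    intro g t ht
    have hdiff : Integrable (fun ω => W g t ω * (Y0 g t ω - Y0 g 1 ω)) μ :=
      hWint g t ht ((hY0 g t).sub (hY0 g 1))
    have hlong : ∫ ω, W g t ω * (Y0 g t ω - Y0 g 1 ω) ∂μ = Λ g t * ∫ ω, W g t ω ∂μ := by
      rw [hW g t ht]
      exact integral_comp_mul_sub_one_eq_of_forall_step hD (hY0 g) (hmean g) ht _
    rw [← hlong, ← integral_add (hWint g t ht (hY0 g 1)) hdiff]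
    congr 1 with ω
    ring
  calc ∫ ω, ∑ g, ∑ t ∈ Icc 1 T, W g t ω * Y0 g t ω ∂μ
      = ∑ g, ∑ t ∈ Icc 1 T, ∫ ω, W g t ω * Y0 g t ω ∂μ := by
        rw [integral_finsetSum _ fun g _ =>
          integrable_finsetSum _ fun t ht => hWint g t ht (hY0 g t)]
        exact Finset.sum_congr rfl fun g _ =>
          integral_finsetSum _ fun t ht => hWint g t ht (hY0 g t)
    _ = ∑ g, ∫ ω, (∑ t ∈ Icc 1 T, W g t ω) * Y0 g 1 ω ∂μ
          + ∑ t ∈ Icc 1 T, ∑ g, Λ g t * ∫ ω, W g t ω ∂μ := by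
        rw [Finset.sum_comm (s := Icc 1 T), ← Finset.sum_add_distrib]
        refine Finset.sum_congr rfl fun g _ => ?_
        simp only [Finset.sum_mul]
        rw [integral_finsetSum _ fun t ht => hWint g t ht (hY0 g 1), ← Finset.sum_add_distrib]
        exact Finset.sum_congr rfl fun t ht => hsplit g t ht
    _ = 0 := by
        simp only [hrow, zero_mul, integral_zero, Finset.sum_const_zero, zero_add]
        refine Finset.sum_eq_zero fun t ht => Finset.sum_mul_eq_zero_of_forall_eq
          (fun g g' => integral_sub_one_eq_of_forall_step (hY0 g) (hY0 g') (htrend g g') ht) ?_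
        rw [← integral_finsetSum _ fun g _ => by simpa using hWint g t ht (integrable_const 1)]
        simp [hcol t ht]

end MeanIndependence

lemma effect_decomposition {ρ : Type*} [Fintype ρ] (f : Bool → (ρ → Bool) → ℝ) (d : Bool)
    (e : ρ → Bool) :
    (if d then 1 else 0) * (f true e - f false e)
      + (1 - ∏ k, (1 - if e k then (1 : ℝ) else 0)) * (f false e - f false fun _ => false)
      = f d e - f false fun _ => false := by
  by_cases he : ∃ k, e k = true
  · obtain ⟨k, hk⟩ := he
    rw [Finset.prod_eq_zero (Finset.mem_univ k) (by simp [hk])]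
    cases d <;> simp
  · obtain rfl : e = fun _ => false := funext fun k => by simpa using fun h => he ⟨k, h⟩
    cases d <;> simp

theorem twfe_decomposition_several_treatments_general
    (G T K : ℕ)
    {Ω : Type} [inst : MeasurableSpace Ω]
    (μ : Measure Ω) [IsProbabilityMeasure μ]
    (po : Fin G → ℕ → Bool → (Fin (K - 1) → Bool) → Ω → ℝ)
    (hpomeas : ∀ g t d dm, Measurable (po g t d dm))
    (hpoint : ∀ g t d dm, Integrable (po g t d dm) μ)
    (D1 : Fin G → ℕ → Ω → Bool)
    (Dm1 : Fin G → ℕ → Ω → Fin (K - 1) → Bool)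
    (hD1meas : ∀ g t, Measurable (D1 g t))
    (hDm1meas : ∀ g t, Measurable (Dm1 g t))
    (Y : Fin G → ℕ → Ω → ℝ)
    (hY : ∀ g t ω, Y g t ω = po g t (D1 g t ω) (Dm1 g t ω) ω)
    (mDg : Fin G → MeasurableSpace Ω)
    (hmDg : ∀ g, mDg g = MeasurableSpace.comap
      (fun ω => fun (t : ℕ) => (D1 g t ω, Dm1 g t ω)) inferInstance)
    -- independent groups
    (hindep : iIndepFun
      (fun (g : Fin G) (ω : Ω) =>
        ((fun (t : ℕ) => (D1 g t ω, Dm1 g t ω)),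
         (fun (t : ℕ) (d : Bool) (dm : Fin (K - 1) → Bool) => po g t d dm ω))) μ)
    -- strong exogeneity of the never-treated outcome
    (hexo : ∀ g t, 2 ≤ t → t ≤ T →
      μ[fun ω => po g t false (fun _ => false) ω -
          po g (t - 1) false (fun _ => false) ω | mDg g]
        =ᵐ[μ] fun _ => ∫ ω, (po g t false (fun _ => false) ω -
          po g (t - 1) false (fun _ => false) ω) ∂μ)
    -- common trends of the never-treated outcome
    (hct : ∀ g g' t, 2 ≤ t → t ≤ T →
      ∫ ω, (po g t false (fun _ => false) ω -
        po g (t - 1) false (fun _ => false) ω) ∂μ =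
      ∫ ω, (po g' t false (fun _ => false) ω -
        po g' (t - 1) false (fun _ => false) ω) ∂μ)
    -- weights (number of observations per cell), balanced panel
    (N : Fin G → ℕ → ℝ) (hN : ∀ g t, 0 < N g t)
    -- real-valued treatments
    (d1R : Fin G → ℕ → Ω → ℝ) (dmR : Fin (K - 1) → Fin G → ℕ → Ω → ℝ)
    (hd1R : ∀ g t ω, d1R g t ω = if D1 g t ω then 1 else 0)
    (hdmR : ∀ k g t ω, dmR k g t ω = if Dm1 g t ω k then 1 else 0)
    -- the TWFE regression: realization-by-realization weighted least squares
    (βhat αhat : Ω → ℝ) (γhat : Ω → Fin G → ℝ) (νhat : Ω → ℕ → ℝ)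
    (ζhat : Ω → Fin (K - 1) → ℝ)
    (hreg : ∀ ω, ∀ (α' β' : ℝ) (γ' : Fin G → ℝ) (ν' : ℕ → ℝ)
        (ζ' : Fin (K - 1) → ℝ),
      ∑ g, ∑ t ∈ Finset.Icc 1 T, N g t * (Y g t ω - αhat ω - γhat ω g - νhat ω t
        - βhat ω * d1R g t ω - ∑ k, ζhat ω k * dmR k g t ω) ^ 2 ≤
      ∑ g, ∑ t ∈ Finset.Icc 1 T, N g t * (Y g t ω - α' - γ' g - ν' t
        - β' * d1R g t ω - ∑ k, ζ' k * dmR k g t ω) ^ 2)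
    -- first-stage regression of D¹ on the other regressors, and its residual ε
    (a0 : Ω → ℝ) (c0 : Ω → Fin G → ℝ) (v0 : Ω → ℕ → ℝ) (z0 : Ω → Fin (K - 1) → ℝ)
    (hfs : ∀ ω, ∀ (a' : ℝ) (c' : Fin G → ℝ) (v' : ℕ → ℝ) (z' : Fin (K - 1) → ℝ),
      ∑ g, ∑ t ∈ Finset.Icc 1 T, N g t * (d1R g t ω - a0 ω - c0 ω g - v0 ω t
        - ∑ k, z0 ω k * dmR k g t ω) ^ 2 ≤
      ∑ g, ∑ t ∈ Finset.Icc 1 T, N g t * (d1R g t ω - a' - c' g - v' t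
        - ∑ k, z' k * dmR k g t ω) ^ 2)
    (ε : Ω → Fin G → ℕ → ℝ)
    (hε : ∀ ω g t, ε ω g t = d1R g t ω - a0 ω - c0 ω g - v0 ω t
      - ∑ k, z0 ω k * dmR k g t ω)
    -- number of treated observations, and the normalization of the weights
    (N1 : Ω → ℝ)
    (hN1pos : ∀ ω, 0 < N1 ω)
    (εbar : Ω → ℝ)
    (hεbar : ∀ ω, εbar ω =
      ∑ g, ∑ t ∈ Finset.Icc 1 T, N g t / N1 ω * d1R g t ω * ε ω g t)
    (hεbarne : ∀ ω, εbar ω ≠ 0)  -- no collinearity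
    (w : Ω → Fin G → ℕ → ℝ) (hw : ∀ ω g t, w ω g t = ε ω g t / εbar ω)
    -- treatment effects
    (Δ1 Δm : Fin G → ℕ → Ω → ℝ)
    (hΔ1 : ∀ g t ω, Δ1 g t ω =
      po g t true (Dm1 g t ω) ω - po g t false (Dm1 g t ω) ω)
    (hΔm : ∀ g t ω, Δm g t ω =
      po g t false (Dm1 g t ω) ω - po g t false (fun _ => false) ω)
    -- the decomposition's right-hand side
    (RHS : Ω → ℝ)
    (hRHS : ∀ ω, RHS ω = ∑ g, ∑ t ∈ Finset.Icc 1 T,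
      (d1R g t ω * (N g t / N1 ω) * w ω g t * Δ1 g t ω
        + (1 - ∏ k, (1 - dmR k g t ω)) * (N g t / N1 ω) * w ω g t * Δm g t ω))
    (hβint : Integrable βhat μ) (hRHSint : Integrable RHS μ) :
    (∫ ω, βhat ω ∂μ = ∫ ω, RHS ω ∂μ) ∧
    ∀ ω, ∑ g, ∑ t ∈ Finset.Icc 1 T, d1R g t ω * (N g t / N1 ω) * w ω g t = 1 := by
  set τ := Icc 1 T
  have hfirst : ∀ ω, IsLeastSquares (univ ×ˢ τ) (Function.uncurry N)
      (twfeFit fun k g t => dmR k g t ω) (Function.uncurry fun g t => d1R g t ω)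
      (a0 ω, c0 ω, v0 ω, z0 ω) := fun ω => isLeastSquares_twfeFit (hfs ω)
  have hεfit : ∀ ω g t, ε ω g t =
      d1R g t ω - twfeFit (fun k g t => dmR k g t ω) (a0 ω, c0 ω, v0 ω, z0 ω) (g, t) :=
    fun ω g t => by rw [hε]; simp only [twfeFit_apply]; ring
  set W : Fin G → ℕ → Ω → ℝ := fun g t ω => twfeWeight τ N (fun g t => d1R g t ω) (ε ω) g t
  have hden : ∀ ω, ∑ g, ∑ t ∈ τ, N g t * ε ω g t * d1R g t ω = N1 ω * εbar ω := fun ω => by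
    simp only [hεbar, Finset.mul_sum]
    exact Finset.sum_congr rfl fun g _ => Finset.sum_congr rfl fun t _ => by
      field_simp [(hN1pos ω).ne']
  have hdecomp : ∀ ω, βhat ω - RHS ω =
      ∑ g, ∑ t ∈ τ, W g t ω * po g t false (fun _ => false) ω := fun ω => by
    have hne : N1 ω * εbar ω ≠ 0 := mul_ne_zero (hN1pos ω).ne' (hεbarne ω)
    have hβ := (hfirst ω).twfe_frisch_waugh (hεfit ω) (isLeastSquares_twfe_long (hreg ω))
      (by rwa [hden])
    have hRHS' : RHS ω = ∑ g, ∑ t ∈ τ, W g t ω * (Y g t ω - po g t false (fun _ => false) ω) := by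
      rw [hRHS]
      refine Finset.sum_congr rfl fun g _ => Finset.sum_congr rfl fun t _ => ?_
      rw [hY, ← effect_decomposition (fun d e => po g t d e ω), hw, hΔ1, hΔm, hd1R]
      simp only [W, twfeWeight, hden, hdmR]
      field_simp [(hN1pos ω).ne', hεbarne ω]
    rw [hβ, hRHS', ← Finset.sum_sub_distrib]
    refine Finset.sum_congr rfl fun g _ => ?_
    rw [← Finset.sum_sub_distrib]
    exact Finset.sum_congr rfl fun t _ => by ring
  -- the regressions depend on the realization only through the treatments in periods `1, …, T`
  set design : Ω → Fin G → τ → Bool × (Fin (K - 1) → Bool) :=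
    fun ω g t => (D1 g t ω, Dm1 g t ω)
  have hWD : ∀ g, ∀ t ∈ τ, Function.FactorsThrough (W g t) design := by
    intro g t ht ω ω' h
    have hD : ∀ g, ∀ t ∈ τ, D1 g t ω = D1 g t ω' ∧ Dm1 g t ω = Dm1 g t ω' :=
      fun g t ht => Prod.ext_iff.1 (congrFun (congrFun h g) ⟨t, ht⟩)
    exact (hfirst ω).twfeWeight_eq_of_eqOn (hεfit ω) (fun g t _ => hN g t) (hfirst ω') (hεfit ω')
      (fun g t ht => by rw [hd1R, hd1R, (hD g t ht).1])
      (fun k g t ht => by rw [hdmR, hdmR, (hD g t ht).2]) g ht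
  have hmean : ∀ g s, 2 ≤ s → s ≤ T → ∀ F : (Fin G → τ → Bool × (Fin (K - 1) → Bool)) → ℝ,
      ∫ ω, F (design ω) *
          (po g s false (fun _ => false) ω - po g (s - 1) false (fun _ => false) ω) ∂μ
        = (∫ ω, (po g s false (fun _ => false) ω - po g (s - 1) false (fun _ => false) ω) ∂μ)
          * ∫ ω, F (design ω) ∂μ := by
    intro g s hs hsT F
    have hm : mDg g ≤ inst := by rw [hmDg g]; exact Measurable.comap_le (by fun_prop)
    have hcm : Measurable[mDg g] fun ω (t : τ) => (D1 g t ω, Dm1 g t ω) := by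
      rw [hmDg g]
      exact (measurable_pi_lambda (fun (e : ℕ → Bool × (Fin (K - 1) → Bool)) (t : τ) => e t)
        fun t => measurable_pi_apply _).comp (comap_measurable _)
    exact hindep.integral_comp_mul_eq_mul_integral_comp (fun g => by fun_prop)
      (c := fun e (t : τ) => e.1 t) (by fun_prop)
      (f := fun e => e.2 s false (fun _ => false) - e.2 (s - 1) false (fun _ => false))
      (by fun_prop) ((hpoint g s false _).sub (hpoint g (s - 1) false _)) hm hcm (hexo g s hs hsT) F
  refine ⟨?_, fun ω => ?_⟩
  · rw [← sub_eq_zero, ← integral_sub hβint hRHSint]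
    simp_rw [hdecomp]
    exact integral_sum_sum_mul_eq_zero_of_parallel_trends (by fun_prop) hWD
      (fun g ω => (hfirst ω).sum_twfeWeight_group (hεfit ω) g)
      (fun t ht ω => (hfirst ω).sum_twfeWeight_period (hεfit ω) ht)
      (fun g t => hpoint g t false _) hmean hct
  · calc _ = (∑ g, ∑ t ∈ τ, N g t / N1 ω * d1R g t ω * ε ω g t) / εbar ω := by
          simp only [Finset.sum_div, hw]
          exact Finset.sum_congr rfl fun g _ => Finset.sum_congr rfl fun t _ => by ring
      _ = 1 := by rw [← hεbar, div_self (hεbarne ω)]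

/-- Decomposition of the TWFE coefficient with several treatments
(Theorem 2). Under balanced panel, sharp design, independent groups, strong
exogeneity and common trends for the never-treated outcome, the expectation of
the coefficient `β̂_fe` on `D¹` in the weighted OLS regression of `Y` on group
fixed effects, time fixed effects, `D¹` and the other treatments equals the
expectation of
`Σ_{(g,t):D¹=1}(N_{g,t}/N₁)w_{g,t}Δ¹_{g,t} + Σ_{(g,t):D^{-1}≠0}(N_{g,t}/N₁)w_{g,t}Δ^{-1}_{g,t}`,
and the weights on the own-treatment effects sum to one. -/
theorem twfe_decomposition_several_treatments
    (G T K : ℕ) (hT : 1 ≤ T) (hK : 2 ≤ K)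
    {Ω : Type} [inst : MeasurableSpace Ω]
    (μ : Measure Ω) [IsProbabilityMeasure μ]
    (po : Fin G → ℕ → Bool → (Fin (K - 1) → Bool) → Ω → ℝ)
    (hpomeas : ∀ g t d dm, Measurable (po g t d dm))
    (hpoint : ∀ g t d dm, Integrable (po g t d dm) μ)
    (D1 : Fin G → ℕ → Ω → Bool)
    (Dm1 : Fin G → ℕ → Ω → Fin (K - 1) → Bool)
    (hD1meas : ∀ g t, Measurable (D1 g t))
    (hDm1meas : ∀ g t, Measurable (Dm1 g t))
    (Y : Fin G → ℕ → Ω → ℝ)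
    (hY : ∀ g t ω, Y g t ω = po g t (D1 g t ω) (Dm1 g t ω) ω)
    (mDg : Fin G → MeasurableSpace Ω)
    (hmDg : ∀ g, mDg g = MeasurableSpace.comap
      (fun ω => fun (t : ℕ) => (D1 g t ω, Dm1 g t ω)) inferInstance)
    -- independent groups
    (hindep : iIndepFun
      (fun (g : Fin G) (ω : Ω) =>
        ((fun (t : ℕ) => (D1 g t ω, Dm1 g t ω)),
         (fun (t : ℕ) (d : Bool) (dm : Fin (K - 1) → Bool) => po g t d dm ω))) μ)
    -- strong exogeneity of the never-treated outcome
    (hexo : ∀ g t, 2 ≤ t → t ≤ T →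
      μ[fun ω => po g t false (fun _ => false) ω -
          po g (t - 1) false (fun _ => false) ω | mDg g]
        =ᵐ[μ] fun _ => ∫ ω, (po g t false (fun _ => false) ω -
          po g (t - 1) false (fun _ => false) ω) ∂μ)
    -- common trends of the never-treated outcome
    (hct : ∀ g g' t, 2 ≤ t → t ≤ T →
      ∫ ω, (po g t false (fun _ => false) ω -
        po g (t - 1) false (fun _ => false) ω) ∂μ =
      ∫ ω, (po g' t false (fun _ => false) ω -
        po g' (t - 1) false (fun _ => false) ω) ∂μ)
    -- weights (number of observations per cell), balanced panel
    (N : Fin G → ℕ → ℝ) (hN : ∀ g t, 0 < N g t)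
    -- real-valued treatments
    (d1R : Fin G → ℕ → Ω → ℝ) (dmR : Fin (K - 1) → Fin G → ℕ → Ω → ℝ)
    (hd1R : ∀ g t ω, d1R g t ω = if D1 g t ω then 1 else 0)
    (hdmR : ∀ k g t ω, dmR k g t ω = if Dm1 g t ω k then 1 else 0)
    -- the TWFE regression: realization-by-realization weighted least squares
    (βhat αhat : Ω → ℝ) (γhat : Ω → Fin G → ℝ) (νhat : Ω → ℕ → ℝ)
    (ζhat : Ω → Fin (K - 1) → ℝ)
    (hreg : ∀ ω, ∀ (α' β' : ℝ) (γ' : Fin G → ℝ) (ν' : ℕ → ℝ)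
        (ζ' : Fin (K - 1) → ℝ),
      ∑ g, ∑ t ∈ Finset.Icc 1 T, N g t * (Y g t ω - αhat ω - γhat ω g - νhat ω t
        - βhat ω * d1R g t ω - ∑ k, ζhat ω k * dmR k g t ω) ^ 2 ≤
      ∑ g, ∑ t ∈ Finset.Icc 1 T, N g t * (Y g t ω - α' - γ' g - ν' t
        - β' * d1R g t ω - ∑ k, ζ' k * dmR k g t ω) ^ 2)
    -- first-stage regression of D¹ on the other regressors, and its residual ε
    (a0 : Ω → ℝ) (c0 : Ω → Fin G → ℝ) (v0 : Ω → ℕ → ℝ) (z0 : Ω → Fin (K - 1) → ℝ)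
    (hfs : ∀ ω, ∀ (a' : ℝ) (c' : Fin G → ℝ) (v' : ℕ → ℝ) (z' : Fin (K - 1) → ℝ),
      ∑ g, ∑ t ∈ Finset.Icc 1 T, N g t * (d1R g t ω - a0 ω - c0 ω g - v0 ω t
        - ∑ k, z0 ω k * dmR k g t ω) ^ 2 ≤
      ∑ g, ∑ t ∈ Finset.Icc 1 T, N g t * (d1R g t ω - a' - c' g - v' t
        - ∑ k, z' k * dmR k g t ω) ^ 2)
    (ε : Ω → Fin G → ℕ → ℝ)
    (hε : ∀ ω g t, ε ω g t = d1R g t ω - a0 ω - c0 ω g - v0 ω t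
      - ∑ k, z0 ω k * dmR k g t ω)
    -- number of treated observations, and the normalization of the weights
    (N1 : Ω → ℝ) (hN1 : ∀ ω, N1 ω = ∑ g, ∑ t ∈ Finset.Icc 1 T, N g t * d1R g t ω)
    (hN1pos : ∀ ω, 0 < N1 ω)
    (εbar : Ω → ℝ)
    (hεbar : ∀ ω, εbar ω =
      ∑ g, ∑ t ∈ Finset.Icc 1 T, N g t / N1 ω * d1R g t ω * ε ω g t)
    (hεbarne : ∀ ω, εbar ω ≠ 0)  -- no collinearity
    (w : Ω → Fin G → ℕ → ℝ) (hw : ∀ ω g t, w ω g t = ε ω g t / εbar ω)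
    -- treatment effects
    (Δ1 Δm : Fin G → ℕ → Ω → ℝ)
    (hΔ1 : ∀ g t ω, Δ1 g t ω =
      po g t true (Dm1 g t ω) ω - po g t false (Dm1 g t ω) ω)
    (hΔm : ∀ g t ω, Δm g t ω =
      po g t false (Dm1 g t ω) ω - po g t false (fun _ => false) ω)
    -- the decomposition's right-hand side
    (RHS : Ω → ℝ)
    (hRHS : ∀ ω, RHS ω = ∑ g, ∑ t ∈ Finset.Icc 1 T,
      (d1R g t ω * (N g t / N1 ω) * w ω g t * Δ1 g t ω
        + (1 - ∏ k, (1 - dmR k g t ω)) * (N g t / N1 ω) * w ω g t * Δm g t ω))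
    (hβint : Integrable βhat μ) (hRHSint : Integrable RHS μ) :
    (∫ ω, βhat ω ∂μ = ∫ ω, RHS ω ∂μ) ∧
    ∀ ω, ∑ g, ∑ t ∈ Finset.Icc 1 T, d1R g t ω * (N g t / N1 ω) * w ω g t = 1 :=
  twfe_decomposition_several_treatments_general G T K (inst := inst) μ po hpomeas hpoint D1 Dm1
    hD1meas hDm1meas Y hY mDg hmDg hindep hexo hct N hN d1R dmR hd1R hdmR βhat αhat γhat νhat ζhat
    hreg a0 c0 v0 z0 hfs ε hε N1 hN1pos εbar hεbar hεbarne w hw Δ1 Δm hΔ1 hΔm RHS hRHS hβint hRHSint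
end

section
/- In the K-treatment TWFE decomposition, if the treatments D^2,...,D^K are mutually exclusive (at most one equals 1 in each cell), then Σ_{(g,t): D^{-1}_{g,t} ≠ 𝟎} (N_{g,t}/N_1) w_{g,t} = 0. -/
open Finset

/-!
Perturbing the coefficient `ζ k` of the weighted least-squares fit by `c` changes its objective by
`-2c Σ N ε D^k + c² Σ N (D^k)²`; since this is nonnegative for every `c`, the residual is orthogonal
to each `D^k`. Mutual exclusivity makes the indicator `1 - Π_k (1 - D^k)` equal to `Σ_k D^k`, so the
sum in question is a multiple of `Σ_k Σ N ε D^k = 0`.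
-/

theorem Finset.prod_one_sub_eq_one_sub_sum {ι R : Type*} [CommRing R] [DecidableEq ι]
    (s : Finset ι) (x : ι → R) (hx : (s : Set ι).Pairwise fun i j => x i * x j = 0) :
    ∏ i ∈ s, (1 - x i) = 1 - ∑ i ∈ s, x i := by
  induction s using Finset.induction_on with
  | empty => simp
  | insert a s ha ih =>
    rw [coe_insert] at hx
    have hcross : x a * ∑ i ∈ s, x i = 0 := by
      rw [mul_sum]
      exact sum_eq_zero fun i hi =>
        hx (Set.mem_insert a _) (Set.mem_insert_of_mem a hi) (by rintro rfl; exact ha hi)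
    rw [prod_insert ha, sum_insert ha, ih (hx.mono (Set.subset_insert a _))]
    linear_combination hcross

theorem one_sub_prod_one_sub_indicator_eq_sum {ι : Type*} [Fintype ι] (b : ι → Bool)
    (hb : ∀ i j, b i = true → b j = true → i = j) :
    1 - ∏ i, (1 - if b i then (1 : ℝ) else 0) = ∑ i, if b i then (1 : ℝ) else 0 := by
  classical
  rw [prod_one_sub_eq_one_sub_sum, sub_sub_cancel]
  intro i _ j _ hij
  by_cases hi : b i <;> by_cases hj : b j <;> simp [hi, hj, hb i j] at hij ⊢

theorem sum_mul_mul_eq_zero_of_forall_sum_mul_sq_le {ι : Type*} (s : Finset ι) (N r x : ι → ℝ)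
    (hmin : ∀ c : ℝ, ∑ i ∈ s, N i * r i ^ 2 ≤ ∑ i ∈ s, N i * (r i - c * x i) ^ 2) :
    ∑ i ∈ s, N i * r i * x i = 0 := by
  set S := ∑ i ∈ s, N i * r i * x i
  set Q := ∑ i ∈ s, N i * x i ^ 2
  have hquad : ∀ c : ℝ, 0 ≤ Q * (c * c) + (-2 * S) * c + 0 := by
    intro c
    have hexpand : ∑ i ∈ s, N i * (r i - c * x i) ^ 2
        = ∑ i ∈ s, N i * r i ^ 2 + (Q * (c * c) + (-2 * S) * c + 0) := by
      simp only [Q, S, sum_mul, mul_sum, ← sum_add_distrib, add_zero]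
      exact sum_congr rfl fun i _ => by ring
    linarith [hmin c]
  have hS : S ^ 2 ≤ 0 := by
    have hdiscrim := discrim_le_zero hquad
    rw [discrim] at hdiscrim
    linarith
  exact pow_eq_zero_iff two_ne_zero |>.mp (le_antisymm hS (sq_nonneg S))

theorem twfe_sum_mul_residual_mul_eq_zero {G K : ℕ} (T : ℕ) (N d1R : Fin G → ℕ → ℝ)
    (dkR : Fin K → Fin G → ℕ → ℝ) (α : ℝ) (γ : Fin G → ℝ) (ν : ℕ → ℝ) (ζ : Fin K → ℝ)
    (hmin : ∀ (α' : ℝ) (γ' : Fin G → ℝ) (ν' : ℕ → ℝ) (ζ' : Fin K → ℝ),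
      ∑ g, ∑ t ∈ Icc 1 T, N g t * (d1R g t - α - γ g - ν t - ∑ k, ζ k * dkR k g t) ^ 2 ≤
      ∑ g, ∑ t ∈ Icc 1 T, N g t * (d1R g t - α' - γ' g - ν' t - ∑ k, ζ' k * dkR k g t) ^ 2)
    (ε : Fin G → ℕ → ℝ) (hε : ∀ g t, ε g t = d1R g t - α - γ g - ν t - ∑ k, ζ k * dkR k g t)
    (k : Fin K) :
    ∑ g, ∑ t ∈ Icc 1 T, N g t * ε g t * dkR k g t = 0 := by
  have hperturb : ∀ (c : ℝ) g t,
      d1R g t - α - γ g - ν t - ∑ j, (ζ + Pi.single k c : Fin K → ℝ) j * dkR j g t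
      = ε g t - c * dkR k g t := by
    intro c g t
    simp only [Pi.add_apply, Pi.single_apply, add_mul, ite_mul, zero_mul, sum_add_distrib,
      sum_ite_eq', mem_univ, ↓reduceIte, hε]
    ring
  have hmin_k : ∀ c : ℝ, ∑ g, ∑ t ∈ Icc 1 T, N g t * ε g t ^ 2
      ≤ ∑ g, ∑ t ∈ Icc 1 T, N g t * (ε g t - c * dkR k g t) ^ 2 := fun c => by
    have h := hmin α γ ν (ζ + Pi.single k c)
    simp only [hperturb, ← hε] at h
    exact h
  have horth := sum_mul_mul_eq_zero_of_forall_sum_mul_sq_le (univ ×ˢ Icc 1 T)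
    (fun p => N p.1 p.2) (fun p => ε p.1 p.2) (fun p => dkR k p.1 p.2)
    (by simpa only [sum_product] using hmin_k)
  simpa only [sum_product] using horth

theorem contamination_weights_sum_to_zero_mutually_exclusive_general
    (G T Km1 : ℕ) (N : Fin G → ℕ → ℝ)
    (Dk : Fin Km1 → Fin G → ℕ → Bool)
    (hexcl : ∀ g t (k k' : Fin Km1), Dk k g t = true → Dk k' g t = true → k = k')
    (d1R : Fin G → ℕ → ℝ) (dkR : Fin Km1 → Fin G → ℕ → ℝ)
    (hdkR : ∀ k g t, dkR k g t = if Dk k g t then 1 else 0)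
    (α : ℝ) (γ : Fin G → ℝ) (ν : ℕ → ℝ) (ζ : Fin Km1 → ℝ)
    (hmin : ∀ (α' : ℝ) (γ' : Fin G → ℝ) (ν' : ℕ → ℝ) (ζ' : Fin Km1 → ℝ),
      ∑ g, ∑ t ∈ Finset.Icc 1 T,
        N g t * (d1R g t - α - γ g - ν t - ∑ k, ζ k * dkR k g t) ^ 2 ≤
      ∑ g, ∑ t ∈ Finset.Icc 1 T,
        N g t * (d1R g t - α' - γ' g - ν' t - ∑ k, ζ' k * dkR k g t) ^ 2)
    (ε : Fin G → ℕ → ℝ)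
    (hε : ∀ g t, ε g t = d1R g t - α - γ g - ν t - ∑ k, ζ k * dkR k g t)
    (N1 : ℝ)
    (εbar : ℝ)
    (w : Fin G → ℕ → ℝ) (hw : ∀ g t, w g t = ε g t / εbar) :
    ∑ g, ∑ t ∈ Finset.Icc 1 T,
      (1 - ∏ k, (1 - dkR k g t)) * (N g t / N1) * w g t = 0 := by
  have horth := twfe_sum_mul_residual_mul_eq_zero T N d1R dkR α γ ν ζ hmin ε hε
  have hind : ∀ g t, 1 - ∏ k, (1 - dkR k g t) = ∑ k, dkR k g t := fun g t => by
    simpa only [hdkR] using one_sub_prod_one_sub_indicator_eq_sum (Dk · g t) (hexcl g t)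
  calc ∑ g, ∑ t ∈ Icc 1 T, (1 - ∏ k, (1 - dkR k g t)) * (N g t / N1) * w g t
      = ∑ g, ∑ t ∈ Icc 1 T, ∑ k, (N1 * εbar)⁻¹ * (N g t * ε g t * dkR k g t) := by
        refine sum_congr rfl fun g _ => sum_congr rfl fun t _ => ?_
        rw [hind, hw, sum_mul, sum_mul]
        exact sum_congr rfl fun k _ => by ring
    _ = (N1 * εbar)⁻¹ * ∑ k, ∑ g, ∑ t ∈ Icc 1 T, N g t * ε g t * dkR k g t := by
        simp only [mul_sum]
        exact (sum_congr rfl fun g _ => sum_comm).trans sum_comm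
    _ = 0 := by simp only [horth, sum_const_zero, mul_zero]

/-- In the K-treatment TWFE decomposition, if the other treatments
`D²,...,D^K` are mutually exclusive (at most one equals one in each cell), then
the contamination weights sum to zero:
`Σ_{(g,t): D^{-1}_{g,t} ≠ 0} (N_{g,t}/N₁) w_{g,t} = 0`. The indicator
`1{D^{-1}_{g,t} ≠ 0}` is written `1 − Π_k (1 − D^k_{g,t})`. -/
theorem contamination_weights_sum_to_zero_mutually_exclusive
    (G T Km1 : ℕ) (N : Fin G → ℕ → ℝ) (hN : ∀ g t, 0 < N g t)
    (D1 : Fin G → ℕ → Bool) (Dk : Fin Km1 → Fin G → ℕ → Bool)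
    (hexcl : ∀ g t (k k' : Fin Km1), Dk k g t = true → Dk k' g t = true → k = k')
    (d1R : Fin G → ℕ → ℝ) (dkR : Fin Km1 → Fin G → ℕ → ℝ)
    (hd1R : ∀ g t, d1R g t = if D1 g t then 1 else 0)
    (hdkR : ∀ k g t, dkR k g t = if Dk k g t then 1 else 0)
    (α : ℝ) (γ : Fin G → ℝ) (ν : ℕ → ℝ) (ζ : Fin Km1 → ℝ)
    (hmin : ∀ (α' : ℝ) (γ' : Fin G → ℝ) (ν' : ℕ → ℝ) (ζ' : Fin Km1 → ℝ),
      ∑ g, ∑ t ∈ Finset.Icc 1 T,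
        N g t * (d1R g t - α - γ g - ν t - ∑ k, ζ k * dkR k g t) ^ 2 ≤
      ∑ g, ∑ t ∈ Finset.Icc 1 T,
        N g t * (d1R g t - α' - γ' g - ν' t - ∑ k, ζ' k * dkR k g t) ^ 2)
    (ε : Fin G → ℕ → ℝ)
    (hε : ∀ g t, ε g t = d1R g t - α - γ g - ν t - ∑ k, ζ k * dkR k g t)
    (N1 : ℝ) (hN1 : N1 = ∑ g, ∑ t ∈ Finset.Icc 1 T, N g t * d1R g t)
    (hN1pos : 0 < N1)
    (εbar : ℝ)
    (hεbar : εbar = ∑ g, ∑ t ∈ Finset.Icc 1 T, N g t / N1 * d1R g t * ε g t)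
    (hεbarne : εbar ≠ 0)
    (w : Fin G → ℕ → ℝ) (hw : ∀ g t, w g t = ε g t / εbar) :
    ∑ g, ∑ t ∈ Finset.Icc 1 T,
      (1 - ∏ k, (1 - dkR k g t)) * (N g t / N1) * w g t = 0 :=
  contamination_weights_sum_to_zero_mutually_exclusive_general G T Km1 N Dk hexcl d1R dkR hdkR α γ ν
    ζ hmin ε hε N1 εbar w hw
end
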